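/- arXiv:1607.04111 — 10 statements merged into one kernel-verified Lean document; each statement's English description precedes it below -/
import Mathlib

section
/- Let α, β > 0, let C > 0, and on the interval J = {u : u > C} set g(u) = u and f(u) = √(u² − C²); assume moreover α²f(u)² − β²g(u)² < 0 for all u ∈ J. Then the mean curvature scalar h(u) = [(f'² − g'²)(β²gf' − α²fg') − (β²g² − α²f²)(f''g' − f'g'')] / (2(f'² − g'²)^{3/2}(β²g² − α²f²)) is identically equal to 1/C on J. In particular, the mean curvature vector H = h·n₂ of the corresponding general rotational surface of elliptic type has constant norm, so every such surface with parallel normalized mean curvature vector field has parallel mean curvature vector field. -/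
/-- The meridian functions of a general rotational surface of elliptic type
with parallel normalized mean curvature vector field. -/
noncomputable def fEll (C : ℝ) : ℝ → ℝ := fun u => Real.sqrt (u ^ 2 - C ^ 2)

noncomputable def gEll : ℝ → ℝ := fun u => u

lemma hasDerivAt_fEll (C u : ℝ) (h : 0 < u ^ 2 - C ^ 2) :
    HasDerivAt (fEll C) (u / Real.sqrt (u ^ 2 - C ^ 2)) u := by
  have h1 : HasDerivAt (fun u : ℝ => u ^ 2 - C ^ 2) (2 * u) u := by
    simpa using ((hasDerivAt_pow 2 u).sub_const (C ^ 2))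
  have h2 := (Real.hasDerivAt_sqrt h.ne').comp u h1
  refine h2.congr_deriv ?_
  have hs : Real.sqrt (u ^ 2 - C ^ 2) ≠ 0 := (Real.sqrt_pos.mpr h).ne'
  field_simp

lemma deriv_fEll (C u : ℝ) (h : 0 < u ^ 2 - C ^ 2) :
    deriv (fEll C) u = u / Real.sqrt (u ^ 2 - C ^ 2) :=
  (hasDerivAt_fEll C u h).deriv

lemma deriv2_fEll (C u : ℝ) (h : 0 < u ^ 2 - C ^ 2) :
    deriv (deriv (fEll C)) u =
      -C ^ 2 / (Real.sqrt (u ^ 2 - C ^ 2)) ^ 3 := by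
  have hopen : IsOpen {v : ℝ | 0 < v ^ 2 - C ^ 2} :=
    isOpen_lt continuous_const (by continuity)
  have hev : deriv (fEll C) =ᶠ[nhds u] fun v => v / Real.sqrt (v ^ 2 - C ^ 2) := by
    filter_upwards [hopen.mem_nhds h] with v hv
    exact deriv_fEll C v hv
  rw [hev.deriv_eq]
  set s := Real.sqrt (u ^ 2 - C ^ 2) with hsdef
  have hs0 : 0 < s := Real.sqrt_pos.mpr h
  have hs2 : s ^ 2 = u ^ 2 - C ^ 2 := Real.sq_sqrt h.le
  have hden : HasDerivAt (fun v : ℝ => Real.sqrt (v ^ 2 - C ^ 2)) (u / s) u :=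
    hasDerivAt_fEll C u h
  have hnum : HasDerivAt (fun v : ℝ => v) 1 u := hasDerivAt_id u
  have := hnum.div hden hs0.ne'
  rw [show (fun v : ℝ => v / Real.sqrt (v ^ 2 - C ^ 2)) = ((fun v : ℝ => v) / fun v => Real.sqrt (v ^ 2 - C ^ 2)) from rfl, this.deriv]
  rw [show Real.sqrt (u ^ 2 - C ^ 2) = s from rfl]
  field_simp
  linear_combination hs2

/-- For `g(u) = u`, `f(u) = √(u² - C²)` on `J = (C, ∞)`, the mean curvature scalar of the
corresponding general rotational surface of elliptic type is identically `1/C`; hence the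
mean curvature vector `H = h·n₂` has constant norm, and every such surface with parallel
normalized mean curvature vector field has parallel mean curvature vector field. -/
theorem mean_curvature_scalar_elliptic_parallel
    (α β C : ℝ) (hα : 0 < α) (hβ : 0 < β) (hC : 0 < C)
    (h2 : ∀ u ∈ Set.Ioi C, α ^ 2 * (fEll C u) ^ 2 - β ^ 2 * (gEll u) ^ 2 < 0) :
    ∀ u ∈ Set.Ioi C,
      (((deriv (fEll C) u) ^ 2 - (deriv gEll u) ^ 2) *
          (β ^ 2 * gEll u * deriv (fEll C) u - α ^ 2 * fEll C u * deriv gEll u)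
        - (β ^ 2 * (gEll u) ^ 2 - α ^ 2 * (fEll C u) ^ 2) *
          (deriv (deriv (fEll C)) u * deriv gEll u -
            deriv (fEll C) u * deriv (deriv gEll) u)) /
      (2 * ((deriv (fEll C) u) ^ 2 - (deriv gEll u) ^ 2) ^ ((3 : ℝ) / 2) *
        (β ^ 2 * (gEll u) ^ 2 - α ^ 2 * (fEll C u) ^ 2))
      = 1 / C := by
  intro u hu
  have hu' : C < u := hu
  have hpos : 0 < u ^ 2 - C ^ 2 := by nlinarith
  have hg1 : deriv gEll = fun _ : ℝ => 1 := by
    funext v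
    show deriv (fun u : ℝ => u) v = 1
    exact deriv_id v
  have hg2 : deriv (deriv gEll) u = 0 := by rw [hg1]; simp
  set s := Real.sqrt (u ^ 2 - C ^ 2) with hsdef
  have hs0 : 0 < s := Real.sqrt_pos.mpr hpos
  have hs2 : s ^ 2 = u ^ 2 - C ^ 2 := Real.sq_sqrt hpos.le
  have hf0 : fEll C u = s := rfl
  have hf1 : deriv (fEll C) u = u / s := deriv_fEll C u hpos
  have hf2 : deriv (deriv (fEll C)) u = -C ^ 2 / s ^ 3 := deriv2_fEll C u hpos
  have hD : 0 < β ^ 2 * u ^ 2 - α ^ 2 * s ^ 2 := by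
    have := h2 u hu
    simp only [hf0, gEll] at this
    linarith
  have hrpow : ((u / s) ^ 2 - 1 ^ 2 : ℝ) ^ ((3 : ℝ) / 2) = (C / s) ^ 3 := by
    have heq : ((u / s) ^ 2 - 1 ^ 2 : ℝ) = (C / s) ^ 2 := by
      field_simp
      nlinarith [hs2]
    rw [heq, ← Real.rpow_natCast (C / s) 2, ← Real.rpow_mul (by positivity)]
    norm_num
  simp only [hg2, hg1, hf0, hf1, hf2, gEll, deriv_const']
  rw [hrpow]
  have hD' : (β ^ 2 * u ^ 2 - α ^ 2 * s ^ 2) ≠ 0 := hD.ne'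
  field_simp
  rw [mul_div_cancel_left₀ _ (by intro h0; apply hD'; linarith)]
  linear_combination (-1 : ℝ) * hs2
end

section
/- Let α, β > 0, let C > 0, and on the interval J = (−C, C) set g(u) = u and f(u) = √(C² − u²). Then the mean curvature scalar h(u) = [(f'² + g'²)(β²f'g − α²fg') + (α²f² + β²g²)(f''g' − f'g'')] / (2(f'² + g'²)^{3/2}(α²f² + β²g²)) is identically equal to −1/C on J. In particular, the mean curvature vector H = h·n₁ of the corresponding general rotational surface of hyperbolic type has constant norm, so every such surface with parallel normalized mean curvature vector field has parallel mean curvature vector field. -/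
/-- The meridian functions of a general rotational surface of hyperbolic type
with parallel normalized mean curvature vector field. -/
noncomputable def fHyp (C : ℝ) : ℝ → ℝ := fun u => Real.sqrt (C ^ 2 - u ^ 2)

noncomputable def gHyp : ℝ → ℝ := fun u => u

lemma fHyp_hasDerivAt (C x : ℝ) (hx : 0 < C ^ 2 - x ^ 2) :
    HasDerivAt (fHyp C) (-x / Real.sqrt (C ^ 2 - x ^ 2)) x := by
  have h1 : HasDerivAt (fun y : ℝ => C ^ 2 - y ^ 2) (-(2 * x)) x := by
    simpa using (hasDerivAt_pow 2 x).const_sub (C ^ 2)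
  have h2 := (Real.hasDerivAt_sqrt (ne_of_gt hx)).comp x h1
  have hs : Real.sqrt (C ^ 2 - x ^ 2) ≠ 0 :=
    ne_of_gt (Real.sqrt_pos.mpr hx)
  refine HasDerivAt.congr_deriv h2 ?_
  field_simp

/-- For `g(u) = u`, `f(u) = √(C² - u²)` on `J = (-C, C)`, the mean curvature scalar of the
corresponding general rotational surface of hyperbolic type is identically `-1/C`; hence the
mean curvature vector `H = h·n₁` has constant norm, and every such surface with parallel
normalized mean curvature vector field has parallel mean curvature vector field. -/
theorem mean_curvature_scalar_hyperbolic_parallel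
    (α β C : ℝ) (hα : 0 < α) (hβ : 0 < β) (hC : 0 < C) :
    ∀ u ∈ Set.Ioo (-C) C,
      (((deriv (fHyp C) u) ^ 2 + (deriv gHyp u) ^ 2) *
          (β ^ 2 * deriv (fHyp C) u * gHyp u - α ^ 2 * fHyp C u * deriv gHyp u)
        + (α ^ 2 * (fHyp C u) ^ 2 + β ^ 2 * (gHyp u) ^ 2) *
          (deriv (deriv (fHyp C)) u * deriv gHyp u -
            deriv (fHyp C) u * deriv (deriv gHyp) u)) /
      (2 * ((deriv (fHyp C) u) ^ 2 + (deriv gHyp u) ^ 2) ^ ((3 : ℝ) / 2) *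
        (α ^ 2 * (fHyp C u) ^ 2 + β ^ 2 * (gHyp u) ^ 2))
      = -(1 / C) := by
  intro u hu
  obtain ⟨hu1, hu2⟩ := hu
  have hpos : 0 < C ^ 2 - u ^ 2 := by nlinarith
  set s := Real.sqrt (C ^ 2 - u ^ 2) with hs_def
  have hs : 0 < s := Real.sqrt_pos.mpr hpos
  have hs2 : s ^ 2 = C ^ 2 - u ^ 2 := Real.sq_sqrt hpos.le
  -- g derivatives
  have hg : deriv gHyp = fun _ : ℝ => (1 : ℝ) := by
    funext x
    exact (hasDerivAt_id x).deriv
  have hg1 : deriv gHyp u = 1 := by rw [hg]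
  have hg2 : deriv (deriv gHyp) u = 0 := by rw [hg]; exact deriv_const _ _
  -- f first derivative
  have hf1 : deriv (fHyp C) u = -u / s := (fHyp_hasDerivAt C u hpos).deriv
  -- f second derivative
  have hopen : IsOpen {x : ℝ | 0 < C ^ 2 - x ^ 2} :=
    isOpen_lt continuous_const (by continuity)
  have heq : deriv (fHyp C) =ᶠ[nhds u] fun x => -x / Real.sqrt (C ^ 2 - x ^ 2) := by
    filter_upwards [hopen.mem_nhds hpos] with x hx
    exact (fHyp_hasDerivAt C x hx).deriv
  have hf2 : deriv (deriv (fHyp C)) u = -C ^ 2 / s ^ 3 := by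
    rw [heq.deriv_eq]
    have hnum : HasDerivAt (fun x : ℝ => -x) (-1) u := (hasDerivAt_id u).neg
    have hden : HasDerivAt (fun x : ℝ => Real.sqrt (C ^ 2 - x ^ 2)) (-u / s) u :=
      fHyp_hasDerivAt C u hpos
    have h : deriv (fun x : ℝ => -x / Real.sqrt (C ^ 2 - x ^ 2)) u = _ := (hnum.div hden hs.ne').deriv
    rw [h, ← hs_def]
    field_simp
    linear_combination (-1 : ℝ) * hs2
  have hfu : fHyp C u = s := rfl
  rw [hf1, hf2, hg1, hg2, hfu]
  show (((-u / s) ^ 2 + 1 ^ 2) * (β ^ 2 * (-u / s) * gHyp u - α ^ 2 * s * 1)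
        + (α ^ 2 * s ^ 2 + β ^ 2 * (gHyp u) ^ 2) * (-C ^ 2 / s ^ 3 * 1 - -u / s * 0)) /
      (2 * ((-u / s) ^ 2 + 1 ^ 2) ^ ((3 : ℝ) / 2) *
        (α ^ 2 * s ^ 2 + β ^ 2 * (gHyp u) ^ 2)) = -(1 / C)
  have hgu : gHyp u = u := rfl
  rw [hgu]
  have hX : ((-u / s) ^ 2 + 1 ^ 2 : ℝ) = (C / s) ^ 2 := by
    field_simp
    nlinarith [hs2]
  rw [hX]
  have hCs : (0 : ℝ) < C / s := div_pos hC hs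
  have hrpow : ((C / s) ^ 2 : ℝ) ^ ((3 : ℝ) / 2) = (C / s) ^ 3 := by
    rw [← Real.rpow_natCast (C / s) 2, ← Real.rpow_mul hCs.le,
      ← Real.rpow_natCast (C / s) 3]
    congr 1
    push_cast
    norm_num
  rw [hrpow]
  have hA : 0 < α ^ 2 * s ^ 2 + β ^ 2 * u ^ 2 := by positivity
  rw [div_eq_iff (by positivity)]
  field_simp
  nlinarith [hs2, mul_pos hA hs, sq_nonneg u, sq_nonneg s]
end

section
/- Let α, β > 0 and let f, g be smooth real functions on an open interval J with f'(u)² − g'(u)² = 1 and α²f(u)² − β²g(u)² < 0 on J. Then the flatness equation α²β²(fg' − f'g)² − (β²g² − α²f²)(β²f'g − α²fg')(f'g'' − f''g') = 0 holds identically on J if and only if one of the following holds: (i) there exist constants a ≠ 0 and c such that β²g(u)² − α²f(u)² = a²(u + c)² for all u ∈ J; (ii) there exists a constant C < 0 such that α²f(u)² − β²g(u)² = C for all u ∈ J. -/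
open Set Filter

private lemma const_of_hasDerivAt_zero' {h : ℝ → ℝ} {p q : ℝ}
    (H : ∀ u ∈ Set.Ioo p q, HasDerivAt h 0 u) :
    ∀ x ∈ Set.Ioo p q, ∀ y ∈ Set.Ioo p q, h x = h y := by
  intro x hx y hy
  refine (convex_Ioo p q).is_const_of_fderivWithin_eq_zero
    (fun u hu => (H u hu).differentiableAt.differentiableWithinAt) (fun u hu => ?_) hx hy
  rw [fderivWithin_of_isOpen isOpen_Ioo hu]
  have h0 := (H u hu).hasFDerivAt.fderiv
  rw [h0]
  ext t
  simp

/-- Classification of flat general rotational surfaces of elliptic type in `𝔼⁴₂`,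
formalized as an ODE characterization for the arclength-parametrized meridian
functions `f, g` on an open interval `J = Ioo p q`. -/
theorem flat_general_rotational_elliptic
    (α β p q : ℝ) (hα : 0 < α) (hβ : 0 < β) (hpq : p < q)
    (f g : ℝ → ℝ)
    (hf : ContDiffOn ℝ (⊤ : ℕ∞) f (Set.Ioo p q)) (hg : ContDiffOn ℝ (⊤ : ℕ∞) g (Set.Ioo p q))
    (h1 : ∀ u ∈ Set.Ioo p q, (deriv f u) ^ 2 - (deriv g u) ^ 2 = 1)
    (h2 : ∀ u ∈ Set.Ioo p q, α ^ 2 * (f u) ^ 2 - β ^ 2 * (g u) ^ 2 < 0) :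
    (∀ u ∈ Set.Ioo p q,
        α ^ 2 * β ^ 2 * (f u * deriv g u - deriv f u * g u) ^ 2
          - (β ^ 2 * (g u) ^ 2 - α ^ 2 * (f u) ^ 2) *
            (β ^ 2 * deriv f u * g u - α ^ 2 * f u * deriv g u) *
            (deriv f u * deriv (deriv g) u - deriv (deriv f) u * deriv g u) = 0)
    ↔
    ((∃ a c : ℝ, a ≠ 0 ∧
        ∀ u ∈ Set.Ioo p q,
          β ^ 2 * (g u) ^ 2 - α ^ 2 * (f u) ^ 2 = a ^ 2 * (u + c) ^ 2) ∨
     (∃ C : ℝ, C < 0 ∧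
        ∀ u ∈ Set.Ioo p q, α ^ 2 * (f u) ^ 2 - β ^ 2 * (g u) ^ 2 = C)) := by
  have hJo : IsOpen (Set.Ioo p q) := isOpen_Ioo
  -- differentiability facts
  have hfd : ∀ u ∈ Set.Ioo p q, DifferentiableAt ℝ f u := fun u hu =>
    (hf.differentiableOn (by simp)).differentiableAt (hJo.mem_nhds hu)
  have hgd : ∀ u ∈ Set.Ioo p q, DifferentiableAt ℝ g u := fun u hu =>
    (hg.differentiableOn (by simp)).differentiableAt (hJo.mem_nhds hu)
  have hf1d : ∀ u ∈ Set.Ioo p q, DifferentiableAt ℝ (deriv f) u := fun u hu =>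
    ((hf.deriv_of_isOpen (m := 1) hJo (by exact (WithTop.coe_le_coe.2 le_top))).differentiableOn (by simp)).differentiableAt (hJo.mem_nhds hu)
  have hg1d : ∀ u ∈ Set.Ioo p q, DifferentiableAt ℝ (deriv g) u := fun u hu =>
    ((hg.deriv_of_isOpen (m := 1) hJo (by exact (WithTop.coe_le_coe.2 le_top))).differentiableOn (by simp)).differentiableAt (hJo.mem_nhds hu)
  set φ : ℝ → ℝ := fun u => β ^ 2 * (g u) ^ 2 - α ^ 2 * (f u) ^ 2 with hφdef
  -- first derivative of φ
  have key1 : ∀ u ∈ Set.Ioo p q,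
      HasDerivAt φ (2 * (β ^ 2 * g u * deriv g u - α ^ 2 * f u * deriv f u)) u := by
    intro u hu
    have hA := (((hgd u hu).hasDerivAt.pow 2).const_mul (β ^ 2)).sub
      (((hfd u hu).hasDerivAt.pow 2).const_mul (α ^ 2))
    exact hA.congr_deriv (by ring)
  have dphi : ∀ u ∈ Set.Ioo p q,
      deriv φ u = 2 * (β ^ 2 * g u * deriv g u - α ^ 2 * f u * deriv f u) :=
    fun u hu => (key1 u hu).deriv
  -- second derivative of φ
  have key2 : ∀ u ∈ Set.Ioo p q,
      HasDerivAt (fun u => 2 * (β ^ 2 * g u * deriv g u - α ^ 2 * f u * deriv f u))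
        (2 * (β ^ 2 * ((deriv g u) ^ 2 + g u * deriv (deriv g) u)
          - α ^ 2 * ((deriv f u) ^ 2 + f u * deriv (deriv f) u))) u := by
    intro u hu
    have hA := ((((hgd u hu).hasDerivAt.mul (hg1d u hu).hasDerivAt).const_mul (β ^ 2)).sub
      (((hfd u hu).hasDerivAt.mul (hf1d u hu).hasDerivAt).const_mul (α ^ 2))).const_mul 2
    refine (hA.congr_deriv ?_).congr_of_eventuallyEq (Filter.Eventually.of_forall fun y => ?_)
    · ring
    · simp only [Pi.mul_apply, Pi.sub_apply]; ring
  have ddphi : ∀ u ∈ Set.Ioo p q,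
      deriv (deriv φ) u = 2 * (β ^ 2 * ((deriv g u) ^ 2 + g u * deriv (deriv g) u)
          - α ^ 2 * ((deriv f u) ^ 2 + f u * deriv (deriv f) u)) := by
    intro u hu
    have heq : deriv φ =ᶠ[nhds u]
        (fun u => 2 * (β ^ 2 * g u * deriv g u - α ^ 2 * f u * deriv f u)) :=
      Filter.eventuallyEq_of_mem (hJo.mem_nhds hu) dphi
    rw [heq.deriv_eq, (key2 u hu).deriv]
  -- differentiating the arclength constraint
  have hc : ∀ u ∈ Set.Ioo p q,
      deriv f u * deriv (deriv f) u = deriv g u * deriv (deriv g) u := by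
    intro u hu
    have heq : (fun u => (deriv f u) ^ 2 - (deriv g u) ^ 2) =ᶠ[nhds u]
        (fun _ => (1 : ℝ)) :=
      Filter.eventuallyEq_of_mem (hJo.mem_nhds hu) h1
    have hD := (((hf1d u hu).hasDerivAt.pow 2).sub ((hg1d u hu).hasDerivAt.pow 2))
    have h0 : deriv (fun u => (deriv f u) ^ 2 - (deriv g u) ^ 2) u = 0 := by
      rw [heq.deriv_eq, deriv_const]
    rw [show (fun u => (deriv f u) ^ 2 - (deriv g u) ^ 2) = deriv f ^ 2 - deriv g ^ 2 from rfl,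
      hD.deriv] at h0
    linear_combination h0 / 2
  -- positivity of φ
  have hφpos : ∀ u ∈ Set.Ioo p q, 0 < φ u := by
    intro u hu
    have := h2 u hu
    have hr : φ u = β ^ 2 * (g u) ^ 2 - α ^ 2 * (f u) ^ 2 := rfl
    linarith
  -- the key algebraic identity
  have keyE : ∀ u ∈ Set.Ioo p q,
      α ^ 2 * β ^ 2 * (f u * deriv g u - deriv f u * g u) ^ 2
          - (β ^ 2 * (g u) ^ 2 - α ^ 2 * (f u) ^ 2) *
            (β ^ 2 * deriv f u * g u - α ^ 2 * f u * deriv g u) *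
            (deriv f u * deriv (deriv g) u - deriv (deriv f) u * deriv g u)
        = ((deriv φ u) ^ 2 - 2 * φ u * deriv (deriv φ) u) / 4 := by
    intro u hu
    rw [dphi u hu, ddphi u hu]
    have hr : φ u = β ^ 2 * (g u) ^ 2 - α ^ 2 * (f u) ^ 2 := rfl
    rw [hr]
    linear_combination
      ((β ^ 2 * (g u) ^ 2 - α ^ 2 * (f u) ^ 2) *
        (α ^ 2 * f u * deriv (deriv f) u - β ^ 2 * g u * deriv (deriv g) u)) * (h1 u hu)
      + ((β ^ 2 * (g u) ^ 2 - α ^ 2 * (f u) ^ 2) *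
        (β ^ 2 * g u * deriv g u - α ^ 2 * f u * deriv f u)) * (hc u hu)
  constructor
  · -- forward direction
    intro hE
    have hflat : ∀ u ∈ Set.Ioo p q, (deriv φ u) ^ 2 = 2 * φ u * deriv (deriv φ) u := by
      intro u hu
      have := hE u hu
      rw [keyE u hu] at this
      linear_combination 4 * this
    set ψ : ℝ → ℝ := fun u => Real.sqrt (φ u) with hψdef
    set η : ℝ → ℝ := fun u => deriv φ u / (2 * Real.sqrt (φ u)) with hηdef
    have hψpos : ∀ u ∈ Set.Ioo p q, 0 < ψ u := fun u hu => Real.sqrt_pos.2 (hφpos u hu)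
    have hψsq : ∀ u ∈ Set.Ioo p q, ψ u ^ 2 = φ u := fun u hu =>
      Real.sq_sqrt (hφpos u hu).le
    have hφd : ∀ u ∈ Set.Ioo p q, HasDerivAt φ (deriv φ u) u := by
      intro u hu
      have := key1 u hu
      rwa [← dphi u hu] at this
    have hψd : ∀ u ∈ Set.Ioo p q, HasDerivAt ψ (η u) u := fun u hu =>
      (hφd u hu).sqrt (hφpos u hu).ne'
    -- deriv φ is differentiable with derivative deriv (deriv φ)
    have hφ1d : ∀ u ∈ Set.Ioo p q, HasDerivAt (deriv φ) (deriv (deriv φ) u) u := by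
      intro u hu
      have heq : (fun u => 2 * (β ^ 2 * g u * deriv g u - α ^ 2 * f u * deriv f u))
          =ᶠ[nhds u] deriv φ :=
        (Filter.eventuallyEq_of_mem (hJo.mem_nhds hu) dphi).symm
      have := (key2 u hu).congr_of_eventuallyEq heq.symm
      rwa [← ddphi u hu] at this
    have hη0 : ∀ u ∈ Set.Ioo p q, HasDerivAt η 0 u := by
      intro u hu
      have hspos : 0 < Real.sqrt (φ u) := Real.sqrt_pos.2 (hφpos u hu)
      have hden : HasDerivAt (fun u => 2 * Real.sqrt (φ u)) (2 * η u) u :=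
        (hψd u hu).const_mul 2
      have hdiv := (hφ1d u hu).div hden (mul_pos two_pos hspos).ne'
      have hval : (deriv (deriv φ) u * (2 * Real.sqrt (φ u))
          - deriv φ u * (2 * η u)) / (2 * Real.sqrt (φ u)) ^ 2 = 0 := by
        have hs0 : Real.sqrt (φ u) ≠ 0 := (hψpos u hu).ne'
        have hsq := hψsq u hu
        have hfl := hflat u hu
        rw [hηdef]
        field_simp
        have hss : Real.sqrt (φ u) * Real.sqrt (φ u) = φ u :=
          Real.mul_self_sqrt (hφpos u hu).le
        linear_combination 2 * deriv (deriv φ) u * hss - hfl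
      rw [hval] at hdiv
      exact hdiv
    -- η is constant
    obtain ⟨u₀, hu₀⟩ : ∃ u₀, u₀ ∈ Set.Ioo p q := ⟨(p + q) / 2, by constructor <;> linarith⟩
    set m : ℝ := η u₀ with hmdef
    have hηconst : ∀ u ∈ Set.Ioo p q, η u = m := fun u hu =>
      const_of_hasDerivAt_zero' hη0 u hu u₀ hu₀
    -- ψ - m * id is constant
    have hθ0 : ∀ u ∈ Set.Ioo p q, HasDerivAt (fun u => ψ u - m * u) 0 u := by
      intro u hu
      have := (hψd u hu).sub ((hasDerivAt_id' (𝕜 := ℝ) u).const_mul m)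
      rw [hηconst u hu] at this
      exact this.congr_deriv (by ring)
    set b : ℝ := ψ u₀ - m * u₀ with hbdef
    have hψlin : ∀ u ∈ Set.Ioo p q, ψ u = m * u + b := by
      intro u hu
      have := const_of_hasDerivAt_zero' hθ0 u hu u₀ hu₀
      linarith [this]
    have hφeq : ∀ u ∈ Set.Ioo p q, φ u = (m * u + b) ^ 2 := by
      intro u hu
      rw [← hψsq u hu, hψlin u hu]
    by_cases hm : m = 0
    · right
      refine ⟨-(b ^ 2), ?_, ?_⟩
      · have h0 := hφeq u₀ hu₀
        rw [hm] at h0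
        have := hφpos u₀ hu₀
        nlinarith
      · intro u hu
        have h0 := hφeq u hu
        rw [hm] at h0
        have hr : φ u = β ^ 2 * (g u) ^ 2 - α ^ 2 * (f u) ^ 2 := rfl
        rw [hr] at h0
        linarith
    · left
      refine ⟨m, b / m, hm, ?_⟩
      intro u hu
      have h0 := hφeq u hu
      have hr : φ u = β ^ 2 * (g u) ^ 2 - α ^ 2 * (f u) ^ 2 := rfl
      rw [hr] at h0
      rw [h0]
      field_simp
  · -- reverse direction
    intro hcase u hu
    rw [keyE u hu]
    have hzero : (deriv φ u) ^ 2 - 2 * φ u * deriv (deriv φ) u = 0 := by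
      rcases hcase with ⟨a, c, _, hac⟩ | ⟨C, _, hC⟩
      · have hEq : Set.EqOn φ (fun u => a ^ 2 * (u + c) ^ 2) (Set.Ioo p q) := fun u hu =>
          hac u hu
        have hd1 : ∀ u ∈ Set.Ioo p q, deriv φ u = 2 * a ^ 2 * (u + c) := by
          intro u hu
          have heq : φ =ᶠ[nhds u] (fun u => a ^ 2 * (u + c) ^ 2) :=
            Filter.eventuallyEq_of_mem (hJo.mem_nhds hu) hEq
          rw [heq.deriv_eq]
          have hD : HasDerivAt (fun u : ℝ => a ^ 2 * (u + c) ^ 2) (2 * a ^ 2 * (u + c)) u := by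
            have := (((hasDerivAt_id' (𝕜 := ℝ) u).add_const c).pow 2).const_mul (a ^ 2)
            exact this.congr_deriv (by ring)
          exact hD.deriv
        have hd2 : deriv (deriv φ) u = 2 * a ^ 2 := by
          have heq : deriv φ =ᶠ[nhds u] (fun u => 2 * a ^ 2 * (u + c)) :=
            Filter.eventuallyEq_of_mem (hJo.mem_nhds hu) hd1
          rw [heq.deriv_eq]
          have hD : HasDerivAt (fun u : ℝ => 2 * a ^ 2 * (u + c)) (2 * a ^ 2) u := by
            have := ((hasDerivAt_id' (𝕜 := ℝ) u).add_const c).const_mul (2 * a ^ 2)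
            exact this.congr_deriv (by ring)
          exact hD.deriv
        have hφu : φ u = a ^ 2 * (u + c) ^ 2 := hac u hu
        rw [hd1 u hu, hd2, hφu]
        ring
      · have hEq : Set.EqOn φ (fun _ => -C) (Set.Ioo p q) := by
          intro u hu
          have := hC u hu
          have hr : φ u = β ^ 2 * (g u) ^ 2 - α ^ 2 * (f u) ^ 2 := rfl
          simp only
          linarith
        have hd1 : ∀ u ∈ Set.Ioo p q, deriv φ u = 0 := by
          intro u hu
          have heq : φ =ᶠ[nhds u] (fun _ => -C) :=
            Filter.eventuallyEq_of_mem (hJo.mem_nhds hu) hEq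
          rw [heq.deriv_eq, deriv_const]
        have hd2 : deriv (deriv φ) u = 0 := by
          have heq : deriv φ =ᶠ[nhds u] (fun _ => (0 : ℝ)) :=
            Filter.eventuallyEq_of_mem (hJo.mem_nhds hu) hd1
          rw [heq.deriv_eq, deriv_const]
        rw [hd1 u hu, hd2]
        ring
    rw [hzero]
    norm_num
end

section
/- Let α, β > 0 and let f, g be smooth real functions on an open interval J with f'(u)² + g'(u)² = 1 and α²f(u)² + β²g(u)² > 0 on J. Then the flatness equation α²β²(fg' − f'g)² + (α²fg' − β²f'g)(f''g' − f'g'')(α²f² + β²g²) = 0 holds identically on J if and only if one of the following holds: (i) there exist constants a ≠ 0 and c such that α²f(u)² + β²g(u)² = a²(u + c)² for all u ∈ J; (ii) there exists a constant C > 0 such that α²f(u)² + β²g(u)² = C for all u ∈ J. -/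
private lemma flat_alg (α β F G F1 G1 F2 G2 : ℝ) (h1 : F1^2+G1^2 = 1)
    (hc : F1*F2 + G1*G2 = 0) :
    4*(α^2*β^2*(F*G1 - F1*G)^2 + (α^2*F*G1 - β^2*F1*G)*(F2*G1 - F1*G2)*(α^2*F^2+β^2*G^2))
    = 2*(α^2*F^2+β^2*G^2)*(2*α^2*((F1)^2 + F*F2) + 2*β^2*((G1)^2 + G*G2))
      - (2*α^2*F*F1 + 2*β^2*G*G1)^2 := by
  obtain ⟨w, hF2, hG2⟩ : ∃ w, F2 = w*G1 ∧ G2 = -(w*F1) :=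
    ⟨F2*G1-F1*G2, by linear_combination F1*hc - F2*h1, by linear_combination G1*hc - G2*h1⟩
  subst hF2 hG2
  linear_combination (4*(α^2*F*G1-β^2*F1*G)*w*(α^2*F^2+β^2*G^2)) * h1

private lemma constOn_Ioo {p q : ℝ} {F : ℝ → ℝ}
    (h : ∀ u ∈ Set.Ioo p q, HasDerivAt F 0 u) :
    ∀ x ∈ Set.Ioo p q, ∀ y ∈ Set.Ioo p q, F x = F y := by
  intro x hx y hy
  refine (convex_Ioo p q).is_const_of_fderivWithin_eq_zero
    (fun u hu => (h u hu).differentiableAt.differentiableWithinAt) (fun u hu => ?_) hx hy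
  rw [fderivWithin_of_isOpen isOpen_Ioo hu, (h u hu).hasFDerivAt.fderiv]
  ext t
  simp

/-- Classification of flat general rotational surfaces of hyperbolic type in `𝔼⁴₂`,
formalized as an ODE characterization for the arclength-parametrized meridian
functions `f, g` on an open interval `J = Ioo p q`. -/
theorem flat_general_rotational_hyperbolic
    (α β p q : ℝ) (hα : 0 < α) (hβ : 0 < β) (hpq : p < q)
    (f g : ℝ → ℝ)
    (hf : ContDiffOn ℝ (⊤ : ℕ∞) f (Set.Ioo p q)) (hg : ContDiffOn ℝ (⊤ : ℕ∞) g (Set.Ioo p q))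
    (h1 : ∀ u ∈ Set.Ioo p q, (deriv f u) ^ 2 + (deriv g u) ^ 2 = 1)
    (h2 : ∀ u ∈ Set.Ioo p q, 0 < α ^ 2 * (f u) ^ 2 + β ^ 2 * (g u) ^ 2) :
    (∀ u ∈ Set.Ioo p q,
        α ^ 2 * β ^ 2 * (f u * deriv g u - deriv f u * g u) ^ 2
          + (α ^ 2 * f u * deriv g u - β ^ 2 * deriv f u * g u) *
            (deriv (deriv f) u * deriv g u - deriv f u * deriv (deriv g) u) *
            (α ^ 2 * (f u) ^ 2 + β ^ 2 * (g u) ^ 2) = 0)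
    ↔
    ((∃ a c : ℝ, a ≠ 0 ∧
        ∀ u ∈ Set.Ioo p q,
          α ^ 2 * (f u) ^ 2 + β ^ 2 * (g u) ^ 2 = a ^ 2 * (u + c) ^ 2) ∨
     (∃ C : ℝ, 0 < C ∧
        ∀ u ∈ Set.Ioo p q, α ^ 2 * (f u) ^ 2 + β ^ 2 * (g u) ^ 2 = C)) := by
  have hJo : IsOpen (Set.Ioo p q) := isOpen_Ioo
  set J := Set.Ioo p q with hJdef
  have hu0 : (p+q)/2 ∈ J := ⟨by linarith, by linarith⟩
  set u₀ : ℝ := (p+q)/2 with hu0def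
  -- helper: value-transfer for HasDerivAt
  have mkD : ∀ {F : ℝ → ℝ} {v v' x : ℝ}, HasDerivAt F v x → v' = v → HasDerivAt F v' x :=
    fun h e => e ▸ h
  -- elementary derivatives
  have hlin : ∀ (c₁ x : ℝ), HasDerivAt (fun y => c₁ * y) c₁ x := by
    intro c₁ x
    simpa using (hasDerivAt_id x).const_mul c₁
  have hquad : ∀ (c₁ x : ℝ), HasDerivAt (fun y => c₁ * y^2) (2*c₁*x) x := by
    intro c₁ x
    have h := ((hasDerivAt_id x).pow 2).const_mul c₁
    exact mkD h (by push_cast; simp [id]; ring)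
  -- basic derivative facts
  have hDA : ∀ (F : ℝ → ℝ), ContDiffOn ℝ (⊤ : ℕ∞) F J → ∀ u ∈ J, HasDerivAt F (deriv F u) u := by
    intro F hF u hu
    exact ((hF.contDiffAt (hJo.mem_nhds hu)).differentiableAt (by simp)).hasDerivAt
  have hf1 : ContDiffOn ℝ (⊤ : ℕ∞) (deriv f) J := hf.deriv_of_isOpen hJo (by simp)
  have hg1 : ContDiffOn ℝ (⊤ : ℕ∞) (deriv g) J := hg.deriv_of_isOpen hJo (by simp)
  have hdf := hDA f hf
  have hdg := hDA g hg
  have hdf1 := hDA (deriv f) hf1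
  have hdg1 := hDA (deriv g) hg1
  -- the constraint f' f'' + g' g'' = 0
  have hcon : ∀ u ∈ J, deriv f u * deriv (deriv f) u + deriv g u * deriv (deriv g) u = 0 := by
    intro u hu
    have hS : HasDerivAt (fun x => (deriv f x)^2 + (deriv g x)^2)
        (2 * (deriv f u * deriv (deriv f) u + deriv g u * deriv (deriv g) u)) u :=
      mkD (((hdf1 u hu).pow 2).add ((hdg1 u hu).pow 2)) (by push_cast; ring)
    have hE : (fun x => (deriv f x)^2 + (deriv g x)^2) =ᶠ[nhds u] (fun _ => (1:ℝ)) :=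
      Filter.eventuallyEq_of_mem (hJo.mem_nhds hu) h1
    have h0 := hS.deriv
    rw [hE.deriv_eq, deriv_const] at h0
    linarith
  -- φ and its derivatives
  set φ : ℝ → ℝ := fun u => α ^ 2 * (f u) ^ 2 + β ^ 2 * (g u) ^ 2 with hφdef
  have hφapp : ∀ x, φ x = α ^ 2 * (f x) ^ 2 + β ^ 2 * (g x) ^ 2 := fun _ => rfl
  have hφc : ContDiffOn ℝ (⊤ : ℕ∞) φ J :=
    (contDiffOn_const.mul (hf.pow 2)).add (contDiffOn_const.mul (hg.pow 2))
  have hdφ : ∀ u ∈ J, HasDerivAt φ (2*α^2*f u*deriv f u + 2*β^2*g u*deriv g u) u := by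
    intro u hu
    exact mkD ((((hdf u hu).pow 2).const_mul (α^2)).add (((hdg u hu).pow 2).const_mul (β^2)))
      (by push_cast; ring)
  have hderivφ : ∀ u ∈ J, deriv φ u = 2*α^2*f u*deriv f u + 2*β^2*g u*deriv g u :=
    fun u hu => (hdφ u hu).deriv
  have hdφ1 : ∀ u ∈ J, HasDerivAt (deriv φ)
      (2*α^2*((deriv f u)^2 + f u*deriv (deriv f) u)
        + 2*β^2*((deriv g u)^2 + g u * deriv (deriv g) u)) u := by
    intro u hu
    have h : HasDerivAt (fun x => 2*α^2*(f x*deriv f x) + 2*β^2*(g x*deriv g x))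
        (2*α^2*(deriv f u * deriv f u + f u * deriv (deriv f) u)
          + 2*β^2*(deriv g u * deriv g u + g u * deriv (deriv g) u)) u :=
      (((hdf u hu).mul (hdf1 u hu)).const_mul (2*α^2)).add
        (((hdg u hu).mul (hdg1 u hu)).const_mul (2*β^2))
    have hE : deriv φ =ᶠ[nhds u] (fun x => 2*α^2*(f x*deriv f x) + 2*β^2*(g x*deriv g x)) :=
      Filter.eventuallyEq_of_mem (hJo.mem_nhds hu) (fun x hx => by rw [hderivφ x hx]; ring)
    exact mkD (h.congr_of_eventuallyEq hE) (by ring)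
  have hderivφ2 : ∀ u ∈ J, deriv (deriv φ) u
      = 2*α^2*((deriv f u)^2 + f u*deriv (deriv f) u)
        + 2*β^2*((deriv g u)^2 + g u * deriv (deriv g) u) :=
    fun u hu => (hdφ1 u hu).deriv
  -- key identity:  4 * (flatness expression) = 2 φ φ'' - (φ')²
  have hkey : ∀ u ∈ J,
      4 * (α ^ 2 * β ^ 2 * (f u * deriv g u - deriv f u * g u) ^ 2
          + (α ^ 2 * f u * deriv g u - β ^ 2 * deriv f u * g u) *
            (deriv (deriv f) u * deriv g u - deriv f u * deriv (deriv g) u) *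
            (α ^ 2 * (f u) ^ 2 + β ^ 2 * (g u) ^ 2))
        = 2 * φ u * deriv (deriv φ) u - (deriv φ u)^2 := by
    intro u hu
    rw [hderivφ2 u hu, hderivφ u hu, hφapp u]
    have := flat_alg α β (f u) (g u) (deriv f u) (deriv g u) (deriv (deriv f) u)
      (deriv (deriv g) u) (h1 u hu) (hcon u hu)
    linarith [this]
  constructor
  · -- forward direction
    intro hflat
    have hode : ∀ u ∈ J, 2 * φ u * deriv (deriv φ) u - (deriv φ u)^2 = 0 := by
      intro u hu
      have h := hkey u hu
      rw [hflat u hu] at h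
      linarith
    -- third derivative vanishes
    have hφ1c : ContDiffOn ℝ (⊤ : ℕ∞) (deriv φ) J := hφc.deriv_of_isOpen hJo (by simp)
    have hφ2c : ContDiffOn ℝ (⊤ : ℕ∞) (deriv (deriv φ)) J := hφ1c.deriv_of_isOpen hJo (by simp)
    have hdφ2 := hDA (deriv (deriv φ)) hφ2c
    have hφ3 : ∀ u ∈ J, deriv (deriv (deriv φ)) u = 0 := by
      intro u hu
      have hG : HasDerivAt (fun x => 2 * φ x * deriv (deriv φ) x - (deriv φ x)^2)
          ((2 * (2*α^2*f u*deriv f u + 2*β^2*g u*deriv g u)) * deriv (deriv φ) u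
            + 2 * φ u * deriv (deriv (deriv φ)) u
            - (2:ℕ) * (deriv φ u)^1 *
              (2*α^2*((deriv f u)^2 + f u*deriv (deriv f) u)
                + 2*β^2*((deriv g u)^2 + g u * deriv (deriv g) u))) u :=
        mkD ((((hdφ u hu).const_mul 2).mul (hdφ2 u hu)).sub ((hdφ1 u hu).pow 2)) (by push_cast; ring)
      have hE : (fun x => 2 * φ x * deriv (deriv φ) x - (deriv φ x)^2)
          =ᶠ[nhds u] (fun _ => (0:ℝ)) :=
        Filter.eventuallyEq_of_mem (hJo.mem_nhds hu) hode
      have h0 := hG.deriv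
      rw [hE.deriv_eq, deriv_const] at h0
      rw [hderivφ u hu, hderivφ2 u hu] at h0
      push_cast at h0
      have hφpos : (0:ℝ) < φ u := by rw [hφapp u]; exact h2 u hu
      have hz : 2 * φ u * deriv (deriv (deriv φ)) u = 0 := by linear_combination -h0
      have h2φ : (2 : ℝ) * φ u ≠ 0 := by positivity
      exact (mul_eq_zero.1 hz).resolve_left h2φ
    -- φ'' is the constant k
    obtain ⟨k, hk⟩ : ∃ k, ∀ u ∈ J, deriv (deriv φ) u = k :=
      ⟨deriv (deriv φ) u₀, fun u hu =>
        constOn_Ioo (fun x hx => (hφ3 x hx) ▸ (hdφ2 x hx)) u hu u₀ hu0⟩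
    -- φ' = k u + b
    obtain ⟨b, hb⟩ : ∃ b, ∀ u ∈ J, deriv φ u = k * u + b := by
      refine ⟨deriv φ u₀ - k * u₀, fun u hu => ?_⟩
      have hc : ∀ x ∈ J, HasDerivAt (fun y => deriv φ y - k * y) 0 x := by
        intro x hx
        refine mkD ((hdφ1 x hx).sub (hlin k x)) ?_
        rw [← hderivφ2 x hx, hk x hx]
        ring
      have h := constOn_Ioo hc u hu u₀ hu0
      linarith
    -- φ = k/2 u² + b u + d
    obtain ⟨d, hd⟩ : ∃ d, ∀ u ∈ J, φ u = k/2 * u^2 + b * u + d := by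
      refine ⟨φ u₀ - k/2 * u₀^2 - b * u₀, fun u hu => ?_⟩
      have hc : ∀ x ∈ J, HasDerivAt (fun y => φ y - (k/2 * y^2 + b * y)) 0 x := by
        intro x hx
        refine mkD ((hdφ x hx).sub ((hquad (k/2) x).add (hlin b x))) ?_
        have h' := hb x hx
        rw [hderivφ x hx] at h'
        linarith
      have h := constOn_Ioo hc u hu u₀ hu0
      linarith
    -- the discriminant relation b² = 2 k d
    have hrel : b^2 = 2*k*d := by
      have h := hode u₀ hu0
      rw [hk u₀ hu0, hb u₀ hu0, hd u₀ hu0] at h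
      linear_combination -h
    have hφ0pos : (0:ℝ) < φ u₀ := by rw [hφapp u₀]; exact h2 u₀ hu0
    have hknn : 0 ≤ k := by
      have h := hode u₀ hu0
      rw [hk u₀ hu0] at h
      nlinarith [sq_nonneg (deriv φ u₀)]
    rcases hknn.eq_or_lt with hk0 | hkpos
    · -- k = 0 : constant case
      right
      have hk0' : k = 0 := by linarith [hk0]
      have hb0 : b = 0 := by
        have hsq : b^2 = 0 := by rw [hrel, hk0']; ring
        exact pow_eq_zero_iff (n := 2) (by norm_num) |>.1 hsq
      have hdconst : ∀ u ∈ J, φ u = d := by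
        intro u hu
        have h := hd u hu
        rw [hk0', hb0] at h
        simpa using h
      refine ⟨d, ?_, ?_⟩
      · have := hdconst u₀ hu0
        linarith
      · intro u hu
        rw [← hφapp u]
        exact hdconst u hu
    · -- k > 0 : parabolic case
      left
      refine ⟨Real.sqrt (k/2), b/k, ?_, ?_⟩
      · exact (Real.sqrt_pos.2 (by linarith)).ne'
      · intro u hu
        have ha2 : (Real.sqrt (k/2))^2 = k/2 := Real.sq_sqrt (by linarith)
        have hk0 : k ≠ 0 := ne_of_gt hkpos
        have hdval : d = b^2/(2*k) := by
          field_simp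
          linear_combination -hrel
        rw [← hφapp u, hd u hu, ha2, hdval]
        field_simp
        ring
  · -- reverse direction
    intro h u hu
    have hq : 2 * φ u * deriv (deriv φ) u - (deriv φ u)^2 = 0 := by
      rcases h with ⟨a, c, ha, hφeq⟩ | ⟨C, hC, hφeq⟩
      · have hd1 : ∀ x ∈ J, deriv φ x = 2 * a^2 * (x + c) := by
          intro x hx
          have hE : φ =ᶠ[nhds x] (fun y => a^2 * (y + c)^2) :=
            Filter.eventuallyEq_of_mem (hJo.mem_nhds hx)
              (fun y hy => by rw [hφapp y]; exact hφeq y hy)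
          have h' : HasDerivAt (fun y => a^2 * (y + c)^2) (2 * a^2 * (x + c)) x :=
            mkD ((((hasDerivAt_id x).add_const c).pow 2).const_mul (a^2))
              (by push_cast; simp [id]; ring)
          rw [hE.deriv_eq, h'.deriv]
        have hd2 : deriv (deriv φ) u = 2 * a^2 := by
          have hE : deriv φ =ᶠ[nhds u] (fun y => 2 * a^2 * (y + c)) :=
            Filter.eventuallyEq_of_mem (hJo.mem_nhds hu) hd1
          have h' : HasDerivAt (fun y => 2 * a^2 * (y + c)) (2 * a^2) u :=
            mkD (((hasDerivAt_id u).add_const c).const_mul (2 * a^2)) (by simp)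
          rw [hE.deriv_eq, h'.deriv]
        rw [hd1 u hu, hd2, hφapp u, hφeq u hu]
        ring
      · have hd1 : ∀ x ∈ J, deriv φ x = 0 := by
          intro x hx
          have hE : φ =ᶠ[nhds x] (fun _ => C) :=
            Filter.eventuallyEq_of_mem (hJo.mem_nhds hx)
              (fun y hy => by rw [hφapp y]; exact hφeq y hy)
          rw [hE.deriv_eq, deriv_const]
        have hd2 : deriv (deriv φ) u = 0 := by
          have hE : deriv φ =ᶠ[nhds u] (fun _ => (0:ℝ)) :=
            Filter.eventuallyEq_of_mem (hJo.mem_nhds hu) hd1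
          rw [hE.deriv_eq, deriv_const]
        rw [hd1 u hu, hd2]
        ring
    have h4 := hkey u hu
    linarith
end

section
/- Let α, β > 0 and let f, g be smooth real functions on an open interval J with f'(u)² − g'(u)² > 0, α²f(u)² − β²g(u)² < 0, and f(u)f'(u) − g(u)g'(u) ≠ 0 for all u ∈ J. Then the flat-normal-connection equation (fg' − gf')·[(β²g² − α²f²)(g'f'' − f'g'') + (f'² − g'²)(β²gf' − α²fg')] = 0 holds identically on J if and only if one of the following holds: (i) α < β and there exists a constant c with 1 < c² < β²/α² such that f(u) = c·g(u) for all u ∈ J; (ii) there exists a constant C ≠ 0 such that (f f' − g g') / (√(f'² − g'²)·√(β²g² − α²f²)) = C for all u ∈ J. -/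
open Set

private lemma const_of_hasDerivAt_zero {F : ℝ → ℝ} {p q : ℝ}
    (h : ∀ x ∈ Ioo p q, HasDerivAt F 0 x)
    {u v : ℝ} (hu : u ∈ Ioo p q) (hv : v ∈ Ioo p q) : F u = F v := by
  refine (convex_Ioo p q).is_const_of_fderivWithin_eq_zero
    (fun x hx => ((h x hx).differentiableAt).differentiableWithinAt) (fun x hx => ?_) hu hv
  rw [fderivWithin_of_isOpen isOpen_Ioo hx, (h x hx).hasFDerivAt.fderiv]
  ext; simp

/-- Classification of general rotational surfaces of elliptic type in `𝔼⁴₂` with flat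
normal connection and non-parallel mean curvature vector field, formalized as an ODE
characterization for the meridian functions `f, g` on an open interval `J = Ioo p q`. -/
theorem flat_normal_connection_elliptic
    (α β p q : ℝ) (hα : 0 < α) (hβ : 0 < β) (hpq : p < q)
    (f g : ℝ → ℝ)
    (hf : ContDiffOn ℝ (⊤ : ℕ∞) f (Set.Ioo p q)) (hg : ContDiffOn ℝ (⊤ : ℕ∞) g (Set.Ioo p q))
    (h1 : ∀ u ∈ Set.Ioo p q, 0 < (deriv f u) ^ 2 - (deriv g u) ^ 2)
    (h2 : ∀ u ∈ Set.Ioo p q, α ^ 2 * (f u) ^ 2 - β ^ 2 * (g u) ^ 2 < 0)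
    (h3 : ∀ u ∈ Set.Ioo p q, f u * deriv f u - g u * deriv g u ≠ 0) :
    (∀ u ∈ Set.Ioo p q,
        (f u * deriv g u - g u * deriv f u) *
          ((β ^ 2 * (g u) ^ 2 - α ^ 2 * (f u) ^ 2) *
              (deriv g u * deriv (deriv f) u - deriv f u * deriv (deriv g) u)
            + ((deriv f u) ^ 2 - (deriv g u) ^ 2) *
              (β ^ 2 * g u * deriv f u - α ^ 2 * f u * deriv g u)) = 0)
    ↔
    ((α < β ∧ ∃ c : ℝ, 1 < c ^ 2 ∧ c ^ 2 < β ^ 2 / α ^ 2 ∧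
        ∀ u ∈ Set.Ioo p q, f u = c * g u) ∨
     (∃ C : ℝ, C ≠ 0 ∧
        ∀ u ∈ Set.Ioo p q,
          (f u * deriv f u - g u * deriv g u) /
            (Real.sqrt ((deriv f u) ^ 2 - (deriv g u) ^ 2) *
              Real.sqrt (β ^ 2 * (g u) ^ 2 - α ^ 2 * (f u) ^ 2)) = C)) := by
  set s : Set ℝ := Set.Ioo p q with hs
  -- basic functions
  set N : ℝ → ℝ := fun u => f u * deriv f u - g u * deriv g u with hN
  set A : ℝ → ℝ := fun u => (deriv f u) ^ 2 - (deriv g u) ^ 2 with hA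
  set B : ℝ → ℝ := fun u => β ^ 2 * (g u) ^ 2 - α ^ 2 * (f u) ^ 2 with hB
  set Q : ℝ → ℝ := fun u => N u ^ 2 / (A u * B u) with hQ
  have hf1 : ContDiffOn ℝ (⊤ : ℕ∞) (deriv f) s := hf.deriv_of_isOpen isOpen_Ioo (by simp)
  have hg1 : ContDiffOn ℝ (⊤ : ℕ∞) (deriv g) s := hg.deriv_of_isOpen isOpen_Ioo (by simp)
  have hdf : ∀ u ∈ s, HasDerivAt f (deriv f u) u := fun u hu =>
    ((hf.contDiffAt (isOpen_Ioo.mem_nhds hu)).differentiableAt (by simp)).hasDerivAt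
  have hdg : ∀ u ∈ s, HasDerivAt g (deriv g u) u := fun u hu =>
    ((hg.contDiffAt (isOpen_Ioo.mem_nhds hu)).differentiableAt (by simp)).hasDerivAt
  have hdf1 : ∀ u ∈ s, HasDerivAt (deriv f) (deriv (deriv f) u) u := fun u hu =>
    ((hf1.contDiffAt (isOpen_Ioo.mem_nhds hu)).differentiableAt (by simp)).hasDerivAt
  have hdg1 : ∀ u ∈ s, HasDerivAt (deriv g) (deriv (deriv g) u) u := fun u hu =>
    ((hg1.contDiffAt (isOpen_Ioo.mem_nhds hu)).differentiableAt (by simp)).hasDerivAt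
  have hApos : ∀ u ∈ s, 0 < A u := h1
  have hBpos : ∀ u ∈ s, 0 < B u := fun u hu => by
    have := h2 u hu; simp only [hB]; linarith
  have hABne : ∀ u ∈ s, A u * B u ≠ 0 := fun u hu =>
    (mul_pos (hApos u hu) (hBpos u hu)).ne'
  -- derivative of Q
  have hQderiv : ∀ u ∈ s, HasDerivAt Q
      (-(2 : ℝ) * N u *
        ((f u * deriv g u - g u * deriv f u) *
          ((β ^ 2 * (g u) ^ 2 - α ^ 2 * (f u) ^ 2) *
              (deriv g u * deriv (deriv f) u - deriv f u * deriv (deriv g) u)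
            + ((deriv f u) ^ 2 - (deriv g u) ^ 2) *
              (β ^ 2 * g u * deriv f u - α ^ 2 * f u * deriv g u))) / (A u * B u) ^ 2) u := by
    intro u hu
    have hNd : HasDerivAt N
        (deriv f u * deriv f u + f u * deriv (deriv f) u
          - (deriv g u * deriv g u + g u * deriv (deriv g) u)) u :=
      ((hdf u hu).mul (hdf1 u hu)).sub ((hdg u hu).mul (hdg1 u hu))
    have hAd : HasDerivAt A
        ((2 : ℕ) * deriv f u ^ 1 * deriv (deriv f) u
          - (2 : ℕ) * deriv g u ^ 1 * deriv (deriv g) u) u :=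
      ((hdf1 u hu).pow 2).sub ((hdg1 u hu).pow 2)
    have hBd : HasDerivAt B
        (β ^ 2 * ((2 : ℕ) * g u ^ 1 * deriv g u)
          - α ^ 2 * ((2 : ℕ) * f u ^ 1 * deriv f u)) u :=
      (((hdg u hu).pow 2).const_mul (β ^ 2)).sub (((hdf u hu).pow 2).const_mul (α ^ 2))
    have h := (hNd.pow 2).div (hAd.mul hBd) (hABne u hu)
    refine h.congr_deriv ?_
    have hne := hABne u hu
    simp only [Pi.mul_apply, Pi.pow_apply, hN, hA, hB]; push_cast
    ring
  -- constancy from zero derivative together with connectivity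
  constructor
  · -- forward direction
    intro hflat
    right
    have hQzero : ∀ u ∈ s, HasDerivAt Q 0 u := by
      intro u hu
      have h := hQderiv u hu
      rwa [hflat u hu, mul_zero, zero_div] at h
    set u₀ : ℝ := (p + q) / 2 with hu₀def
    have hu₀ : u₀ ∈ s := by constructor <;> (simp only [hu₀def]; linarith)
    -- the constant
    set C : ℝ := N u₀ / (Real.sqrt (A u₀) * Real.sqrt (B u₀)) with hC
    have hden₀ : 0 < Real.sqrt (A u₀) * Real.sqrt (B u₀) :=
      mul_pos (Real.sqrt_pos.2 (hApos u₀ hu₀)) (Real.sqrt_pos.2 (hBpos u₀ hu₀))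
    refine ⟨C, div_ne_zero (h3 u₀ hu₀) hden₀.ne', fun u hu => ?_⟩
    -- Q is constant
    have hQconst : Q u = Q u₀ := const_of_hasDerivAt_zero hQzero hu hu₀
    -- N has constant sign
    have hNcont : ContinuousOn N s :=
      ((hf.continuousOn.mul hf1.continuousOn).sub
        (hg.continuousOn.mul hg1.continuousOn))
    have hsign : 0 < N u * N u₀ := by
      rcases lt_or_gt_of_ne (mul_ne_zero (h3 u hu) (h3 u₀ hu₀)) with hlt | hgt
      · exfalso
        have hsub : uIcc u u₀ ⊆ s := Set.ordConnected_Ioo.uIcc_subset hu hu₀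
        have : (0 : ℝ) ∈ uIcc (N u) (N u₀) := by
          rcases mul_neg_iff.1 hlt with ⟨h1', h2'⟩ | ⟨h1', h2'⟩ <;>
            · rw [Set.mem_uIcc]; first
                | exact Or.inl ⟨le_of_lt h2', le_of_lt h1'⟩
                | exact Or.inr ⟨le_of_lt h2', le_of_lt h1'⟩
                | exact Or.inl ⟨le_of_lt h1', le_of_lt h2'⟩
                | exact Or.inr ⟨le_of_lt h1', le_of_lt h2'⟩
        obtain ⟨x, hx, hx0⟩ := intermediate_value_uIcc (hNcont.mono hsub) this
        exact h3 x (hsub hx) hx0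
      · exact hgt
    -- conclude
    set x : ℝ := N u / (Real.sqrt (A u) * Real.sqrt (B u)) with hx
    have hden : 0 < Real.sqrt (A u) * Real.sqrt (B u) :=
      mul_pos (Real.sqrt_pos.2 (hApos u hu)) (Real.sqrt_pos.2 (hBpos u hu))
    have hsq : (Real.sqrt (A u) * Real.sqrt (B u)) ^ 2 = A u * B u := by
      rw [mul_pow, Real.sq_sqrt (hApos u hu).le, Real.sq_sqrt (hBpos u hu).le]
    have hsq₀ : (Real.sqrt (A u₀) * Real.sqrt (B u₀)) ^ 2 = A u₀ * B u₀ := by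
      rw [mul_pow, Real.sq_sqrt (hApos u₀ hu₀).le, Real.sq_sqrt (hBpos u₀ hu₀).le]
    have hx2 : x ^ 2 = C ^ 2 := by
      rw [hx, hC, div_pow, div_pow, hsq, hsq₀]
      exact hQconst
    have hxC : 0 < x * C := by
      rw [hx, hC, div_mul_div_comm]
      exact div_pos hsign (mul_pos hden hden₀)
    have hfac : (x - C) * (x + C) = 0 := by linear_combination hx2
    rcases mul_eq_zero.1 hfac with h | h
    · linarith [sub_eq_zero.1 h]
    · exfalso
      have : x = -C := by linarith
      rw [this] at hxC
      nlinarith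
  · -- reverse direction
    rintro (⟨hab, c, hc1, hc2, hfg⟩ | ⟨C, hC0, hCeq⟩) u hu
    · -- case (i): f = c g, so f g' - g f' = 0
      have hev : f =ᶠ[nhds u] fun v => c * g v := by
        filter_upwards [isOpen_Ioo.mem_nhds hu] with v hv using hfg v hv
      have hder : deriv f u = c * deriv g u := by
        rw [hev.deriv_eq, deriv_const_mul c (hdg u hu).differentiableAt]
      rw [hfg u hu, hder]
      ring_nf
    · -- case (ii): Q is constant C², so N * (W * E) = 0
      have hQc : ∀ v ∈ s, Q v = C ^ 2 := by
        intro v hv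
        have hden : 0 < Real.sqrt (A v) * Real.sqrt (B v) :=
          mul_pos (Real.sqrt_pos.2 (hApos v hv)) (Real.sqrt_pos.2 (hBpos v hv))
        have hNv : N v = C * (Real.sqrt (A v) * Real.sqrt (B v)) :=
          (div_eq_iff hden.ne').1 (hCeq v hv)
        have hsq : (Real.sqrt (A v) * Real.sqrt (B v)) ^ 2 = A v * B v := by
          rw [mul_pow, Real.sq_sqrt (hApos v hv).le, Real.sq_sqrt (hBpos v hv).le]
        simp only [hQ]
        rw [hNv, mul_pow, hsq, mul_div_assoc, div_self (hABne v hv), mul_one]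
      have hQev : Q =ᶠ[nhds u] fun _ => C ^ 2 := by
        filter_upwards [isOpen_Ioo.mem_nhds hu] with v hv using hQc v hv
      have hQ0 : HasDerivAt Q 0 u :=
        (hasDerivAt_const u (C ^ 2)).congr_of_eventuallyEq hQev
      have huniq := hQ0.unique (hQderiv u hu)
      -- 0 = -2 N (W E) / (A B)^2
      have hnum : -(2 : ℝ) * N u *
          ((f u * deriv g u - g u * deriv f u) *
            ((β ^ 2 * (g u) ^ 2 - α ^ 2 * (f u) ^ 2) *
                (deriv g u * deriv (deriv f) u - deriv f u * deriv (deriv g) u)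
              + ((deriv f u) ^ 2 - (deriv g u) ^ 2) *
                (β ^ 2 * g u * deriv f u - α ^ 2 * f u * deriv g u))) = 0 := by
        exact (div_eq_zero_iff.mp huniq.symm).resolve_right (pow_ne_zero 2 (hABne u hu))
      have hN0 := h3 u hu
      have h2ne : (-(2 : ℝ) * N u) ≠ 0 := by
        simp only [hN]; intro h; apply hN0; simp only [hN] at *; nlinarith [h]
      exact (mul_eq_zero.1 hnum).resolve_left h2ne
end

section
/- Let α, β > 0 and let f, g be smooth real functions on an open interval J with f'(u)² + g'(u)² > 0, α²f(u)² + β²g(u)² > 0, and f(u)f'(u) + g(u)g'(u) ≠ 0 for all u ∈ J. Then the flat-normal-connection equation (fg' − f'g)·[(α²f² + β²g²)(f''g' − f'g'') + (f'² + g'²)(α²fg' − β²gf')] = 0 holds identically on J if and only if one of the following holds: (i) α ≠ β and there exists a constant c ≠ 0 such that f(u) = c·g(u) for all u ∈ J; (ii) there exists a constant C ≠ 0 such that (f f' + g g') / (√(f'² + g'²)·√(α²f² + β²g²)) = C for all u ∈ J. -/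
open Set Real

/-- Derivative of the angle-function `(f f' + g g')/(√(f'²+g'²)·√(α²f²+β²g²))`. -/
lemma aux_hasDerivAt_phi (α β : ℝ) (f g : ℝ → ℝ) {s : Set ℝ} (hs : IsOpen s)
    (hf : ContDiffOn ℝ (⊤ : ℕ∞) f s) (hg : ContDiffOn ℝ (⊤ : ℕ∞) g s) {u : ℝ} (hu : u ∈ s)
    (h1 : 0 < (deriv f u) ^ 2 + (deriv g u) ^ 2)
    (h2 : 0 < α ^ 2 * (f u) ^ 2 + β ^ 2 * (g u) ^ 2) :
    HasDerivAt (fun x => (f x * deriv f x + g x * deriv g x) /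
        (Real.sqrt ((deriv f x) ^ 2 + (deriv g x) ^ 2) *
          Real.sqrt (α ^ 2 * (f x) ^ 2 + β ^ 2 * (g x) ^ 2)))
      ((f u * deriv g u - deriv f u * g u) *
          ((α ^ 2 * (f u) ^ 2 + β ^ 2 * (g u) ^ 2) *
              (deriv (deriv f) u * deriv g u - deriv f u * deriv (deriv g) u)
            + ((deriv f u) ^ 2 + (deriv g u) ^ 2) *
              (α ^ 2 * f u * deriv g u - β ^ 2 * g u * deriv f u)) /
        (((deriv f u) ^ 2 + (deriv g u) ^ 2) * Real.sqrt ((deriv f u) ^ 2 + (deriv g u) ^ 2) *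
          ((α ^ 2 * (f u) ^ 2 + β ^ 2 * (g u) ^ 2) *
            Real.sqrt (α ^ 2 * (f u) ^ 2 + β ^ 2 * (g u) ^ 2)))) u := by
  have hfu : HasDerivAt f (deriv f u) u :=
    ((hf.contDiffAt (hs.mem_nhds hu)).differentiableAt (by simp)).hasDerivAt
  have hgu : HasDerivAt g (deriv g u) u :=
    ((hg.contDiffAt (hs.mem_nhds hu)).differentiableAt (by simp)).hasDerivAt
  have hf1 : ContDiffOn ℝ (⊤ : ℕ∞) (deriv f) s := hf.deriv_of_isOpen hs (by simp)
  have hg1 : ContDiffOn ℝ (⊤ : ℕ∞) (deriv g) s := hg.deriv_of_isOpen hs (by simp)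
  have hfu2 : HasDerivAt (deriv f) (deriv (deriv f) u) u :=
    ((hf1.contDiffAt (hs.mem_nhds hu)).differentiableAt (by simp)).hasDerivAt
  have hgu2 : HasDerivAt (deriv g) (deriv (deriv g) u) u :=
    ((hg1.contDiffAt (hs.mem_nhds hu)).differentiableAt (by simp)).hasDerivAt
  have hA : HasDerivAt (fun x => (deriv f x) ^ 2 + (deriv g x) ^ 2)
      ((2 : ℕ) * deriv f u ^ 1 * deriv (deriv f) u + (2 : ℕ) * deriv g u ^ 1 * deriv (deriv g) u)
      u := (hfu2.pow 2).add (hgu2.pow 2)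
  have hB : HasDerivAt (fun x => α ^ 2 * (f x) ^ 2 + β ^ 2 * (g x) ^ 2)
      (α ^ 2 * ((2 : ℕ) * f u ^ 1 * deriv f u) + β ^ 2 * ((2 : ℕ) * g u ^ 1 * deriv g u)) u :=
    ((hfu.pow 2).const_mul (α ^ 2)).add ((hgu.pow 2).const_mul (β ^ 2))
  have hF : HasDerivAt (fun x => f x * deriv f x + g x * deriv g x)
      ((deriv f u * deriv f u + f u * deriv (deriv f) u) +
        (deriv g u * deriv g u + g u * deriv (deriv g) u)) u :=
    (hfu.mul hfu2).add (hgu.mul hgu2)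
  have hQ := (hA.sqrt h1.ne').mul (hB.sqrt h2.ne')
  have hQne : Real.sqrt ((deriv f u) ^ 2 + (deriv g u) ^ 2) *
      Real.sqrt (α ^ 2 * (f u) ^ 2 + β ^ 2 * (g u) ^ 2) ≠ 0 :=
    (mul_pos (Real.sqrt_pos.2 h1) (Real.sqrt_pos.2 h2)).ne'
  have key := hF.div hQ hQne
  convert key using 1
  any_goals with_reducible_and_instances rfl
  simp only [Pi.mul_apply]
  set a := Real.sqrt ((deriv f u) ^ 2 + (deriv g u) ^ 2) with ha
  set b := Real.sqrt (α ^ 2 * (f u) ^ 2 + β ^ 2 * (g u) ^ 2) with hb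
  have ha0 : a ≠ 0 := (Real.sqrt_pos.2 h1).ne'
  have hb0 : b ≠ 0 := (Real.sqrt_pos.2 h2).ne'
  have ha2 : a ^ 2 = (deriv f u) ^ 2 + (deriv g u) ^ 2 := Real.sq_sqrt h1.le
  have hb2 : b ^ 2 = α ^ 2 * (f u) ^ 2 + β ^ 2 * (g u) ^ 2 := Real.sq_sqrt h2.le
  have e1 : ((deriv f u * deriv f u + f u * deriv (deriv f) u +
        (deriv g u * deriv g u + g u * deriv (deriv g) u)) * (a * b) -
        (f u * deriv f u + g u * deriv g u) *
          (((2 : ℕ) * deriv f u ^ 1 * deriv (deriv f) u +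
              (2 : ℕ) * deriv g u ^ 1 * deriv (deriv g) u) / (2 * a) * b +
            a * ((α ^ 2 * ((2 : ℕ) * f u ^ 1 * deriv f u) +
              β ^ 2 * ((2 : ℕ) * g u ^ 1 * deriv g u)) / (2 * b)))) / (a * b) ^ 2
      = (2 * (deriv f u * deriv f u + f u * deriv (deriv f) u +
            (deriv g u * deriv g u + g u * deriv (deriv g) u)) * (a ^ 2) * (b ^ 2) -
          (f u * deriv f u + g u * deriv g u) *
            ((2 * deriv f u * deriv (deriv f) u + 2 * deriv g u * deriv (deriv g) u) * (b ^ 2) +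
              (a ^ 2) * (2 * α ^ 2 * f u * deriv f u + 2 * β ^ 2 * g u * deriv g u))) /
        (2 * (a ^ 2 * a) * (b ^ 2 * b)) := by
    push_cast
    field_simp
  rw [e1, ha2, hb2]
  rw [div_eq_div_iff (by positivity) (by positivity)]
  ring

/-- Classification of general rotational surfaces of hyperbolic type in `𝔼⁴₂` with flat
normal connection and non-parallel mean curvature vector field, formalized as an ODE
characterization for the meridian functions `f, g` on an open interval `J = Ioo p q`. -/
theorem flat_normal_connection_hyperbolic
    (α β p q : ℝ) (hα : 0 < α) (hβ : 0 < β) (hpq : p < q)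
    (f g : ℝ → ℝ)
    (hf : ContDiffOn ℝ (⊤ : ℕ∞) f (Set.Ioo p q)) (hg : ContDiffOn ℝ (⊤ : ℕ∞) g (Set.Ioo p q))
    (h1 : ∀ u ∈ Set.Ioo p q, 0 < (deriv f u) ^ 2 + (deriv g u) ^ 2)
    (h2 : ∀ u ∈ Set.Ioo p q, 0 < α ^ 2 * (f u) ^ 2 + β ^ 2 * (g u) ^ 2)
    (h3 : ∀ u ∈ Set.Ioo p q, f u * deriv f u + g u * deriv g u ≠ 0) :
    (∀ u ∈ Set.Ioo p q,
        (f u * deriv g u - deriv f u * g u) *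
          ((α ^ 2 * (f u) ^ 2 + β ^ 2 * (g u) ^ 2) *
              (deriv (deriv f) u * deriv g u - deriv f u * deriv (deriv g) u)
            + ((deriv f u) ^ 2 + (deriv g u) ^ 2) *
              (α ^ 2 * f u * deriv g u - β ^ 2 * g u * deriv f u)) = 0)
    ↔
    ((α ≠ β ∧ ∃ c : ℝ, c ≠ 0 ∧ ∀ u ∈ Set.Ioo p q, f u = c * g u) ∨
     (∃ C : ℝ, C ≠ 0 ∧
        ∀ u ∈ Set.Ioo p q,
          (f u * deriv f u + g u * deriv g u) /
            (Real.sqrt ((deriv f u) ^ 2 + (deriv g u) ^ 2) *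
              Real.sqrt (α ^ 2 * (f u) ^ 2 + β ^ 2 * (g u) ^ 2)) = C)) := by
  have hJ : IsOpen (Set.Ioo p q) := isOpen_Ioo
  set φ : ℝ → ℝ := fun x => (f x * deriv f x + g x * deriv g x) /
      (Real.sqrt ((deriv f x) ^ 2 + (deriv g x) ^ 2) *
        Real.sqrt (α ^ 2 * (f x) ^ 2 + β ^ 2 * (g x) ^ 2)) with hφ
  have hDpos : ∀ u ∈ Set.Ioo p q,
      0 < ((deriv f u) ^ 2 + (deriv g u) ^ 2) * Real.sqrt ((deriv f u) ^ 2 + (deriv g u) ^ 2) *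
        ((α ^ 2 * (f u) ^ 2 + β ^ 2 * (g u) ^ 2) *
          Real.sqrt (α ^ 2 * (f u) ^ 2 + β ^ 2 * (g u) ^ 2)) := by
    intro u hu
    exact mul_pos (mul_pos (h1 u hu) (Real.sqrt_pos.2 (h1 u hu)))
      (mul_pos (h2 u hu) (Real.sqrt_pos.2 (h2 u hu)))
  have key : ∀ u ∈ Set.Ioo p q, HasDerivAt φ
      ((f u * deriv g u - deriv f u * g u) *
          ((α ^ 2 * (f u) ^ 2 + β ^ 2 * (g u) ^ 2) *
              (deriv (deriv f) u * deriv g u - deriv f u * deriv (deriv g) u)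
            + ((deriv f u) ^ 2 + (deriv g u) ^ 2) *
              (α ^ 2 * f u * deriv g u - β ^ 2 * g u * deriv f u)) /
        (((deriv f u) ^ 2 + (deriv g u) ^ 2) * Real.sqrt ((deriv f u) ^ 2 + (deriv g u) ^ 2) *
          ((α ^ 2 * (f u) ^ 2 + β ^ 2 * (g u) ^ 2) *
            Real.sqrt (α ^ 2 * (f u) ^ 2 + β ^ 2 * (g u) ^ 2)))) u := fun u hu =>
    aux_hasDerivAt_phi α β f g hJ hf hg hu (h1 u hu) (h2 u hu)
  constructor
  · intro hEq
    right
    have hzero : ∀ u ∈ Set.Ioo p q, HasDerivAt φ 0 u := by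
      intro u hu
      have h := key u hu
      rwa [hEq u hu, zero_div] at h
    have hconst : ∀ x ∈ Set.Ioo p q, ∀ y ∈ Set.Ioo p q, φ x = φ y := by
      intro x hx y hy
      refine (convex_Ioo p q).is_const_of_fderivWithin_eq_zero
        (fun z hz => ((hzero z hz).differentiableAt).differentiableWithinAt) ?_ hx hy
      intro z hz
      rw [fderivWithin_of_isOpen hJ hz]
      have := (hzero z hz).hasFDerivAt.fderiv
      rw [this]
      ext
      simp
    set m : ℝ := (p + q) / 2 with hm
    have hmJ : m ∈ Set.Ioo p q := ⟨by linarith, by linarith⟩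
    refine ⟨φ m, ?_, fun u hu => hconst u hu m hmJ⟩
    have hQ : 0 < Real.sqrt ((deriv f m) ^ 2 + (deriv g m) ^ 2) *
        Real.sqrt (α ^ 2 * (f m) ^ 2 + β ^ 2 * (g m) ^ 2) :=
      mul_pos (Real.sqrt_pos.2 (h1 m hmJ)) (Real.sqrt_pos.2 (h2 m hmJ))
    exact div_ne_zero (h3 m hmJ) hQ.ne'
  · rintro (⟨hab, c, hc, hfc⟩ | ⟨C, hC, hCeq⟩) u hu
    · have hev : f =ᶠ[nhds u] fun x => c * g x := by
        filter_upwards [hJ.mem_nhds hu] with x hx using hfc x hx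
      have hgd : DifferentiableAt ℝ g u :=
        (hg.contDiffAt (hJ.mem_nhds hu)).differentiableAt (by simp)
      have hdf : deriv f u = c * deriv g u := by
        rw [hev.deriv_eq, deriv_const_mul c hgd]
      rw [hfc u hu, hdf]
      ring
    · have hev : φ =ᶠ[nhds u] fun _ => C := by
        filter_upwards [hJ.mem_nhds hu] with x hx using hCeq x hx
      have hd0 : deriv φ u = 0 := by rw [hev.deriv_eq, deriv_const]
      have hd := (key u hu).deriv
      rw [hd0] at hd
      have hD := (hDpos u hu).ne'
      rw [eq_comm, div_eq_zero_iff] at hd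
      exact hd.resolve_right hD
end

section
/- Let M₁ be a general rotational surface of elliptic type with plane meridians in E⁴₂, and for each (u,v) define the mean curvature vector H(u,v) = ½·(P(z_uu)/E + P(z_vv)/G), where E = g₀(z_u, z_u), G = g₀(z_v, z_v), and P(w) = w − (g₀(w, z_u)/E)·z_u − (g₀(w, z_v)/G)·z_v is the g₀-orthogonal projection onto the normal space. Then for every (u,v) ∈ J × ℝ one has g₀(H(u,v), H(u,v)) ≤ 0, with equality only if H(u,v) = 0. In particular H is never lightlike, so there are no quasi-minimal general rotational surfaces of elliptic type with plane meridian curves. -/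
noncomputable section

/-- The neutral metric `g₀` of `𝔼⁴₂`. -/
def neutralMetric (v w : Fin 4 → ℝ) : ℝ :=
  v 0 * w 0 + v 1 * w 1 - v 2 * w 2 - v 3 * w 3

/-- Parametrization of the general rotational surface of elliptic type. -/
def zEll (α β : ℝ) (f g : ℝ → ℝ) (u v : ℝ) : Fin 4 → ℝ :=
  ![f u * Real.cos (α * v), f u * Real.sin (α * v),
    g u * Real.cos (β * v), g u * Real.sin (β * v)]

def zEll_u (α β : ℝ) (f g : ℝ → ℝ) (u v : ℝ) : Fin 4 → ℝ :=
  deriv (fun t => zEll α β f g t v) u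

def zEll_v (α β : ℝ) (f g : ℝ → ℝ) (u v : ℝ) : Fin 4 → ℝ :=
  deriv (fun t => zEll α β f g u t) v

def zEll_uu (α β : ℝ) (f g : ℝ → ℝ) (u v : ℝ) : Fin 4 → ℝ :=
  deriv (fun t => zEll_u α β f g t v) u

def zEll_vv (α β : ℝ) (f g : ℝ → ℝ) (u v : ℝ) : Fin 4 → ℝ :=
  deriv (fun t => zEll_v α β f g u t) v

/-- `g₀`-orthogonal projection onto the normal space of the surface at `(u,v)`. -/
def projEll (α β : ℝ) (f g : ℝ → ℝ) (u v : ℝ) (w : Fin 4 → ℝ) : Fin 4 → ℝ :=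
  w - (neutralMetric w (zEll_u α β f g u v) /
        neutralMetric (zEll_u α β f g u v) (zEll_u α β f g u v)) • zEll_u α β f g u v
    - (neutralMetric w (zEll_v α β f g u v) /
        neutralMetric (zEll_v α β f g u v) (zEll_v α β f g u v)) • zEll_v α β f g u v

/-- The mean curvature vector of the general rotational surface of elliptic type. -/
def meanCurvEll (α β : ℝ) (f g : ℝ → ℝ) (u v : ℝ) : Fin 4 → ℝ :=
  (1 / 2 : ℝ) •
    ((1 / neutralMetric (zEll_u α β f g u v) (zEll_u α β f g u v)) •
        projEll α β f g u v (zEll_uu α β f g u v)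
      + (1 / neutralMetric (zEll_v α β f g u v) (zEll_v α β f g u v)) •
        projEll α β f g u v (zEll_vv α β f g u v))

theorem hasDerivAt_vec4 {a b c d : ℝ → ℝ} {a' b' c' d' x : ℝ}
    (ha : HasDerivAt a a' x) (hb : HasDerivAt b b' x)
    (hc : HasDerivAt c c' x) (hd : HasDerivAt d d' x) :
    HasDerivAt (fun t => ![a t, b t, c t, d t]) ![a', b', c', d'] x := by
  rw [hasDerivAt_pi]
  intro i
  fin_cases i
  · simpa using ha
  · simpa using hb
  · simpa [Matrix.cons_val_two, Matrix.tail_cons] using hc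
  · simpa [Matrix.cons_val_three, Matrix.tail_cons] using hd

theorem hasDerivAt_mul_cos (k γ v : ℝ) :
    HasDerivAt (fun t => k * Real.cos (γ * t)) (-(γ * k) * Real.sin (γ * v)) v := by
  have hγ : HasDerivAt (fun t : ℝ => γ * t) γ v := by
    simpa using (hasDerivAt_id v).const_mul γ
  have := ((Real.hasDerivAt_cos (γ * v)).comp v hγ).const_mul k
  exact this.congr_deriv (by ring)

theorem hasDerivAt_mul_sin (k γ v : ℝ) :
    HasDerivAt (fun t => k * Real.sin (γ * t)) ((γ * k) * Real.cos (γ * v)) v := by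
  have hγ : HasDerivAt (fun t : ℝ => γ * t) γ v := by
    simpa using (hasDerivAt_id v).const_mul γ
  have := ((Real.hasDerivAt_sin (γ * v)).comp v hγ).const_mul k
  exact this.congr_deriv (by ring)

theorem zEll_v_eq (α β : ℝ) (f g : ℝ → ℝ) (u v : ℝ) :
    zEll_v α β f g u v =
      ![(α * f u) * -Real.sin (α * v), (α * f u) * Real.cos (α * v),
        (β * g u) * -Real.sin (β * v), (β * g u) * Real.cos (β * v)] := by
  have h : HasDerivAt (fun t => zEll α β f g u t)
      (![(α * f u) * -Real.sin (α * v), (α * f u) * Real.cos (α * v),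
        (β * g u) * -Real.sin (β * v), (β * g u) * Real.cos (β * v)]) v := by
    have h0 := hasDerivAt_mul_cos (f u) α v
    have h1 := hasDerivAt_mul_sin (f u) α v
    have h2 := hasDerivAt_mul_cos (g u) β v
    have h3 := hasDerivAt_mul_sin (g u) β v
    have := hasDerivAt_vec4 h0 h1 h2 h3
    unfold zEll
    convert this using 2 <;> ring
  exact h.deriv

theorem zEll_u_eq (α β : ℝ) (f g : ℝ → ℝ) (u v : ℝ)
    (hfd : DifferentiableAt ℝ f u) (hgd : DifferentiableAt ℝ g u) :
    zEll_u α β f g u v =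
      ![deriv f u * Real.cos (α * v), deriv f u * Real.sin (α * v),
        deriv g u * Real.cos (β * v), deriv g u * Real.sin (β * v)] := by
  have h : HasDerivAt (fun t => zEll α β f g t v)
      (![deriv f u * Real.cos (α * v), deriv f u * Real.sin (α * v),
        deriv g u * Real.cos (β * v), deriv g u * Real.sin (β * v)]) u := by
    have h0 := hfd.hasDerivAt.mul_const (Real.cos (α * v))
    have h1 := hfd.hasDerivAt.mul_const (Real.sin (α * v))
    have h2 := hgd.hasDerivAt.mul_const (Real.cos (β * v))
    have h3 := hgd.hasDerivAt.mul_const (Real.sin (β * v))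
    exact hasDerivAt_vec4 h0 h1 h2 h3
  exact h.deriv

theorem zEll_vv_eq (α β : ℝ) (f g : ℝ → ℝ) (u v : ℝ) :
    zEll_vv α β f g u v =
      ![(α * (α * f u)) * -Real.cos (α * v), (α * (α * f u)) * -Real.sin (α * v),
        (β * (β * g u)) * -Real.cos (β * v), (β * (β * g u)) * -Real.sin (β * v)] := by
  have hfun : (fun t => zEll_v α β f g u t) = fun t =>
      ![(α * f u) * -Real.sin (α * t), (α * f u) * Real.cos (α * t),
        (β * g u) * -Real.sin (β * t), (β * g u) * Real.cos (β * t)] :=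
    funext fun t => zEll_v_eq α β f g u t
  have h : HasDerivAt (fun t =>
      (![(α * f u) * -Real.sin (α * t), (α * f u) * Real.cos (α * t),
        (β * g u) * -Real.sin (β * t), (β * g u) * Real.cos (β * t)] : Fin 4 → ℝ))
      (![(α * (α * f u)) * -Real.cos (α * v), (α * (α * f u)) * -Real.sin (α * v),
        (β * (β * g u)) * -Real.cos (β * v), (β * (β * g u)) * -Real.sin (β * v)]) v := by
    have h0 := hasDerivAt_mul_sin (-(α * f u)) α v
    have h1 := hasDerivAt_mul_cos (α * f u) α v
    have h2 := hasDerivAt_mul_sin (-(β * g u)) β v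
    have h3 := hasDerivAt_mul_cos (β * g u) β v
    have := hasDerivAt_vec4 h0 h1 h2 h3
    convert this using 2 <;> ring
  unfold zEll_vv
  rw [hfun]
  exact h.deriv

theorem zEll_uu_eq (α β : ℝ) (f g : ℝ → ℝ) (u v : ℝ) {s : Set ℝ} (hs : IsOpen s)
    (hu : u ∈ s)
    (hfd : ∀ t ∈ s, DifferentiableAt ℝ f t) (hgd : ∀ t ∈ s, DifferentiableAt ℝ g t)
    (hfd2 : DifferentiableAt ℝ (deriv f) u) (hgd2 : DifferentiableAt ℝ (deriv g) u) :
    zEll_uu α β f g u v =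
      ![deriv (deriv f) u * Real.cos (α * v), deriv (deriv f) u * Real.sin (α * v),
        deriv (deriv g) u * Real.cos (β * v), deriv (deriv g) u * Real.sin (β * v)] := by
  have heq : (fun t => zEll_u α β f g t v) =ᶠ[nhds u] fun t =>
      ![deriv f t * Real.cos (α * v), deriv f t * Real.sin (α * v),
        deriv g t * Real.cos (β * v), deriv g t * Real.sin (β * v)] := by
    filter_upwards [hs.mem_nhds hu] with t ht
    exact zEll_u_eq α β f g t v (hfd t ht) (hgd t ht)
  have h : HasDerivAt (fun t =>
      (![deriv f t * Real.cos (α * v), deriv f t * Real.sin (α * v),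
        deriv g t * Real.cos (β * v), deriv g t * Real.sin (β * v)] : Fin 4 → ℝ))
      (![deriv (deriv f) u * Real.cos (α * v), deriv (deriv f) u * Real.sin (α * v),
        deriv (deriv g) u * Real.cos (β * v), deriv (deriv g) u * Real.sin (β * v)]) u := by
    have h0 := hfd2.hasDerivAt.mul_const (Real.cos (α * v))
    have h1 := hfd2.hasDerivAt.mul_const (Real.sin (α * v))
    have h2 := hgd2.hasDerivAt.mul_const (Real.cos (β * v))
    have h3 := hgd2.hasDerivAt.mul_const (Real.sin (β * v))
    exact hasDerivAt_vec4 h0 h1 h2 h3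
  unfold zEll_uu
  rw [heq.deriv_eq]
  exact h.deriv

theorem nm4 (a1 a2 a3 a4 b1 b2 b3 b4 : ℝ) :
    neutralMetric ![a1, a2, a3, a4] ![b1, b2, b3, b4] =
      a1 * b1 + a2 * b2 - a3 * b3 - a4 * b4 := by
  simp [neutralMetric, Matrix.cons_val_two, Matrix.cons_val_three, Matrix.tail_cons]

/-- There are no quasi-minimal general rotational surfaces of elliptic type with plane
meridian curves: the mean curvature vector is never lightlike. -/
theorem no_quasi_minimal_elliptic
    (α β p q : ℝ) (hα : 0 < α) (hβ : 0 < β) (hpq : p < q)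
    (f g : ℝ → ℝ)
    (hf : ContDiffOn ℝ (⊤ : ℕ∞) f (Set.Ioo p q)) (hg : ContDiffOn ℝ (⊤ : ℕ∞) g (Set.Ioo p q))
    (h1 : ∀ u ∈ Set.Ioo p q, 0 < (deriv f u) ^ 2 - (deriv g u) ^ 2)
    (h2 : ∀ u ∈ Set.Ioo p q, α ^ 2 * (f u) ^ 2 - β ^ 2 * (g u) ^ 2 < 0) :
    ∀ u ∈ Set.Ioo p q, ∀ v : ℝ,
      neutralMetric (meanCurvEll α β f g u v) (meanCurvEll α β f g u v) ≤ 0 ∧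
      (neutralMetric (meanCurvEll α β f g u v) (meanCurvEll α β f g u v) = 0 →
        meanCurvEll α β f g u v = 0) := by
  intro u hu v
  have hso : IsOpen (Set.Ioo p q) := isOpen_Ioo
  have hfd : ∀ t ∈ Set.Ioo p q, DifferentiableAt ℝ f t := fun t ht =>
    (hf.differentiableOn (by simp)).differentiableAt (hso.mem_nhds ht)
  have hgd : ∀ t ∈ Set.Ioo p q, DifferentiableAt ℝ g t := fun t ht =>
    (hg.differentiableOn (by simp)).differentiableAt (hso.mem_nhds ht)
  have hfd2 : DifferentiableAt ℝ (deriv f) u :=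
    (((hf.deriv_of_isOpen (m := (⊤ : ℕ∞)) hso (by simp)).differentiableOn (by simp))).differentiableAt
      (hso.mem_nhds hu)
  have hgd2 : DifferentiableAt ℝ (deriv g) u :=
    (((hg.deriv_of_isOpen (m := (⊤ : ℕ∞)) hso (by simp)).differentiableOn (by simp))).differentiableAt
      (hso.mem_nhds hu)
  have hzu := zEll_u_eq α β f g u v (hfd u hu) (hgd u hu)
  have hzv := zEll_v_eq α β f g u v
  have hzuu := zEll_uu_eq α β f g u v hso hu hfd hgd hfd2 hgd2
  have hzvv := zEll_vv_eq α β f g u v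
  have hpy1 : Real.sin (α * v) ^ 2 + Real.cos (α * v) ^ 2 = 1 :=
    Real.sin_sq_add_cos_sq (α * v)
  have hpy2 : Real.sin (β * v) ^ 2 + Real.cos (β * v) ^ 2 = 1 :=
    Real.sin_sq_add_cos_sq (β * v)
  have hE : neutralMetric (zEll_u α β f g u v) (zEll_u α β f g u v) =
      deriv f u ^ 2 - deriv g u ^ 2 := by
    rw [hzu, nm4]
    linear_combination (deriv f u) ^ 2 * hpy1 - (deriv g u) ^ 2 * hpy2
  have hG : neutralMetric (zEll_v α β f g u v) (zEll_v α β f g u v) =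
      α ^ 2 * (f u) ^ 2 - β ^ 2 * (g u) ^ 2 := by
    rw [hzv, nm4]
    linear_combination (α * f u) ^ 2 * hpy1 - (β * g u) ^ 2 * hpy2
  have hg1 : neutralMetric (zEll_uu α β f g u v) (zEll_u α β f g u v) =
      deriv f u * deriv (deriv f) u - deriv g u * deriv (deriv g) u := by
    rw [hzuu, hzu, nm4]
    linear_combination (deriv f u * deriv (deriv f) u) * hpy1
      - (deriv g u * deriv (deriv g) u) * hpy2
  have hg2 : neutralMetric (zEll_uu α β f g u v) (zEll_v α β f g u v) = 0 := by
    rw [hzuu, hzv, nm4]; ring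
  have hg3 : neutralMetric (zEll_vv α β f g u v) (zEll_u α β f g u v) =
      β ^ 2 * g u * deriv g u - α ^ 2 * f u * deriv f u := by
    rw [hzvv, hzu, nm4]
    linear_combination (-(α ^ 2 * f u * deriv f u)) * hpy1
      + (β ^ 2 * g u * deriv g u) * hpy2
  have hg4 : neutralMetric (zEll_vv α β f g u v) (zEll_v α β f g u v) = 0 := by
    rw [hzvv, hzv, nm4]; ring
  have hEpos := h1 u hu
  have hGneg := h2 u hu
  obtain ⟨E, hEdef⟩ : ∃ x : ℝ, x = deriv f u ^ 2 - deriv g u ^ 2 := ⟨_, rfl⟩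
  obtain ⟨Gm, hGdef⟩ : ∃ x : ℝ, x = α ^ 2 * (f u) ^ 2 - β ^ 2 * (g u) ^ 2 := ⟨_, rfl⟩
  obtain ⟨a, hadef⟩ : ∃ x : ℝ,
      x = deriv f u * deriv (deriv f) u - deriv g u * deriv (deriv g) u := ⟨_, rfl⟩
  obtain ⟨b, hbdef⟩ : ∃ x : ℝ,
      x = β ^ 2 * g u * deriv g u - α ^ 2 * f u * deriv f u := ⟨_, rfl⟩
  rw [← hEdef] at hE hEpos
  rw [← hGdef] at hG hGneg
  rw [← hadef] at hg1
  rw [← hbdef] at hg3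
  obtain ⟨A, hA⟩ : ∃ x : ℝ, x = (1 / 2) * ((1 / E) * (deriv (deriv f) u - (a / E) * deriv f u)
      + (1 / Gm) * (-(α ^ 2 * f u) - (b / E) * deriv f u)) := ⟨_, rfl⟩
  obtain ⟨B, hB⟩ : ∃ x : ℝ, x = (1 / 2) * ((1 / E) * (deriv (deriv g) u - (a / E) * deriv g u)
      + (1 / Gm) * (-(β ^ 2 * g u) - (b / E) * deriv g u)) := ⟨_, rfl⟩
  have hEne : E ≠ 0 := ne_of_gt hEpos
  have hGne : Gm ≠ 0 := ne_of_lt hGneg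
  have hcomp : ∀ i : Fin 4,
      meanCurvEll α β f g u v i =
      (1 / 2) * ((1 / E) * (zEll_uu α β f g u v i - (a / E) * zEll_u α β f g u v i
          - (0 / Gm) * zEll_v α β f g u v i)
        + (1 / Gm) * (zEll_vv α β f g u v i - (b / E) * zEll_u α β f g u v i
          - (0 / Gm) * zEll_v α β f g u v i)) := by
    intro i
    simp only [meanCurvEll, projEll, hg1, hg2, hg3, hg4, hE, hG,
      Pi.smul_apply, Pi.add_apply, Pi.sub_apply, smul_eq_mul]
  have hm0 : meanCurvEll α β f g u v 0 = A * Real.cos (α * v) := by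
    rw [hcomp 0, hzu, hzv, hzuu, hzvv]
    simp only [Matrix.cons_val_zero]
    rw [hA]; ring
  have hm1 : meanCurvEll α β f g u v 1 = A * Real.sin (α * v) := by
    rw [hcomp 1, hzu, hzv, hzuu, hzvv]
    simp only [Matrix.cons_val_one, Matrix.head_cons, Matrix.cons_val_zero]
    rw [hA]; ring
  have hm2 : meanCurvEll α β f g u v 2 = B * Real.cos (β * v) := by
    rw [hcomp 2, hzu, hzv, hzuu, hzvv]
    simp only [Matrix.cons_val_two, Matrix.tail_cons, Matrix.head_cons]
    rw [hB]; ring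
  have hm3 : meanCurvEll α β f g u v 3 = B * Real.sin (β * v) := by
    rw [hcomp 3, hzu, hzv, hzuu, hzvv]
    simp only [Matrix.cons_val_three, Matrix.tail_cons, Matrix.head_cons]
    rw [hB]; ring
  have hkey : A * deriv f u = B * deriv g u := by
    have hEne2 : (deriv f u ^ 2 - deriv g u ^ 2) ≠ 0 := by rw [← hEdef]; exact hEne
    rw [hA, hB, hadef, hbdef, hEdef]
    field_simp [hGne]
    ring
  have hmm : neutralMetric (meanCurvEll α β f g u v) (meanCurvEll α β f g u v) =
      A ^ 2 - B ^ 2 := by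
    simp only [neutralMetric, hm0, hm1, hm2, hm3]
    linear_combination A ^ 2 * hpy1 - B ^ 2 * hpy2
  have hsq : A ^ 2 * deriv f u ^ 2 = B ^ 2 * deriv g u ^ 2 := by
    calc A ^ 2 * deriv f u ^ 2 = (A * deriv f u) ^ 2 := by ring
      _ = (B * deriv g u) ^ 2 := by rw [hkey]
      _ = B ^ 2 * deriv g u ^ 2 := by ring
  have hE2 : 0 < deriv f u ^ 2 - deriv g u ^ 2 := by rw [← hEdef]; exact hEpos
  clear hcomp hzu hzv hzuu hzvv hE hG hg1 hg2 hg3 hg4 hA hB hadef hbdef hkey hGdef hEdef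
    hf hg hfd hgd hfd2 hgd2 h1 h2 hGne hGneg hEne hEpos hpy1 hpy2
  have hF2 : 0 < deriv f u ^ 2 := by nlinarith [sq_nonneg (deriv g u)]
  constructor
  · rw [hmm]
    nlinarith [hsq, hE2, sq_nonneg B, hF2]
  · intro h0
    rw [hmm] at h0
    have hB2 : B ^ 2 = 0 := by nlinarith [hsq, hE2, sq_nonneg B, hF2]
    have hA2 : A ^ 2 = 0 := by linarith
    have hA0 : A = 0 := by nlinarith [sq_nonneg A]
    have hB0 : B = 0 := by nlinarith [sq_nonneg B]
    funext i
    fin_cases i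
    · show meanCurvEll α β f g u v 0 = (0 : ℝ)
      rw [hm0, hA0]; ring
    · show meanCurvEll α β f g u v 1 = (0 : ℝ)
      rw [hm1, hA0]; ring
    · show meanCurvEll α β f g u v 2 = (0 : ℝ)
      rw [hm2, hB0]; ring
    · show meanCurvEll α β f g u v 3 = (0 : ℝ)
      rw [hm3, hB0]; ring

end
end

section
/- Let M₂ be a general rotational surface of hyperbolic type with plane meridians in E⁴₂, with orthonormal normal frame n₁ = (g'·cosh(αv), −f'·cosh(βv), g'·sinh(αv), −f'·sinh(βv))/√(f'² + g'²) and n₂ = (βg·sinh(αv), −αf·sinh(βv), βg·cosh(αv), −αf·cosh(βv))/√(α²f² + β²g²). Let G₁ be the 2×2 matrix diag(E, G) with E = g₀(z_u,z_u), G = g₀(z_v,z_v), and for k = 1, 2 let H_k be the 2×2 matrix with entries (H_k)₁₁ = g₀(z_uu, n_k), (H_k)₁₂ = (H_k)₂₁ = g₀(z_uv, n_k), (H_k)₂₂ = g₀(z_vv, n_k), so that A_k = G₁⁻¹·H_k is the matrix of the shape operator A_{n_k} in the basis (z_u, z_v). Then trace(A₁·A₂) = 0 at every point (u,v); consequently the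 allied mean curvature vector a(H) = (‖H‖/2)·tr(A₁∘A₂)·n₂ vanishes identically, i.e. M₂ is a Chen surface in E⁴₂. -/
noncomputable section

open Matrix

/-- Parametrization of the general rotational surface of hyperbolic type. -/
def zHyp (α β : ℝ) (f g : ℝ → ℝ) (u v : ℝ) : Fin 4 → ℝ :=
  ![f u * Real.cosh (α * v), g u * Real.cosh (β * v),
    f u * Real.sinh (α * v), g u * Real.sinh (β * v)]

def zHyp_u (α β : ℝ) (f g : ℝ → ℝ) (u v : ℝ) : Fin 4 → ℝ :=
  deriv (fun t => zHyp α β f g t v) u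

def zHyp_v (α β : ℝ) (f g : ℝ → ℝ) (u v : ℝ) : Fin 4 → ℝ :=
  deriv (fun t => zHyp α β f g u t) v

def zHyp_uu (α β : ℝ) (f g : ℝ → ℝ) (u v : ℝ) : Fin 4 → ℝ :=
  deriv (fun t => zHyp_u α β f g t v) u

def zHyp_uv (α β : ℝ) (f g : ℝ → ℝ) (u v : ℝ) : Fin 4 → ℝ :=
  deriv (fun t => zHyp_u α β f g u t) v

def zHyp_vv (α β : ℝ) (f g : ℝ → ℝ) (u v : ℝ) : Fin 4 → ℝ :=
  deriv (fun t => zHyp_v α β f g u t) v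

/-- The unit spacelike normal `n₁` of the general rotational surface of hyperbolic type. -/
def n1Hyp (α β : ℝ) (f g : ℝ → ℝ) (u v : ℝ) : Fin 4 → ℝ :=
  (1 / Real.sqrt ((deriv f u) ^ 2 + (deriv g u) ^ 2)) •
    ![deriv g u * Real.cosh (α * v), -(deriv f u * Real.cosh (β * v)),
      deriv g u * Real.sinh (α * v), -(deriv f u * Real.sinh (β * v))]

/-- The unit timelike normal `n₂` of the general rotational surface of hyperbolic type. -/
def n2Hyp (α β : ℝ) (f g : ℝ → ℝ) (u v : ℝ) : Fin 4 → ℝ :=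
  (1 / Real.sqrt (α ^ 2 * (f u) ^ 2 + β ^ 2 * (g u) ^ 2)) •
    ![β * g u * Real.sinh (α * v), -(α * f u * Real.sinh (β * v)),
      β * g u * Real.cosh (α * v), -(α * f u * Real.cosh (β * v))]

/-- The matrix of the first fundamental form in the basis `(z_u, z_v)`. -/
def G1Hyp (α β : ℝ) (f g : ℝ → ℝ) (u v : ℝ) : Matrix (Fin 2) (Fin 2) ℝ :=
  !![neutralMetric (zHyp_u α β f g u v) (zHyp_u α β f g u v), 0;
     0, neutralMetric (zHyp_v α β f g u v) (zHyp_v α β f g u v)]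

/-- The matrix of the second fundamental form with respect to a normal `n`. -/
def secFFHyp (α β : ℝ) (f g : ℝ → ℝ) (u v : ℝ) (n : Fin 4 → ℝ) :
    Matrix (Fin 2) (Fin 2) ℝ :=
  !![neutralMetric (zHyp_uu α β f g u v) n, neutralMetric (zHyp_uv α β f g u v) n;
     neutralMetric (zHyp_uv α β f g u v) n, neutralMetric (zHyp_vv α β f g u v) n]

/-- The matrix of the shape operator `A_n` in the basis `(z_u, z_v)`. -/
def shapeHyp (α β : ℝ) (f g : ℝ → ℝ) (u v : ℝ) (n : Fin 4 → ℝ) :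
    Matrix (Fin 2) (Fin 2) ℝ :=
  (G1Hyp α β f g u v)⁻¹ * secFFHyp α β f g u v n

lemma zu_eq (α β : ℝ) (f g : ℝ → ℝ) (t v : ℝ)
    (hf : DifferentiableAt ℝ f t) (hg : DifferentiableAt ℝ g t) :
    zHyp_u α β f g t v =
      ![deriv f t * Real.cosh (α * v), deriv g t * Real.cosh (β * v),
        deriv f t * Real.sinh (α * v), deriv g t * Real.sinh (β * v)] := by
  have h : HasDerivAt (fun s => zHyp α β f g s v)
      (![deriv f t * Real.cosh (α * v), deriv g t * Real.cosh (β * v),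
        deriv f t * Real.sinh (α * v), deriv g t * Real.sinh (β * v)]) t := by
    rw [hasDerivAt_pi]
    intro i
    fin_cases i <;> simp [zHyp] <;>
      first
        | exact hf.hasDerivAt.mul_const _
        | exact hg.hasDerivAt.mul_const _
  exact h.deriv

lemma zv_eq (α β : ℝ) (f g : ℝ → ℝ) (u v : ℝ) :
    zHyp_v α β f g u v =
      ![f u * (Real.sinh (α * v) * α), g u * (Real.sinh (β * v) * β),
        f u * (Real.cosh (α * v) * α), g u * (Real.cosh (β * v) * β)] := by
  have hA : HasDerivAt (fun t : ℝ => α * t) α v := by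
    simpa using (hasDerivAt_id v).const_mul α
  have hB : HasDerivAt (fun t : ℝ => β * t) β v := by
    simpa using (hasDerivAt_id v).const_mul β
  have h : HasDerivAt (fun t => zHyp α β f g u t)
      (![f u * (Real.sinh (α * v) * α), g u * (Real.sinh (β * v) * β),
        f u * (Real.cosh (α * v) * α), g u * (Real.cosh (β * v) * β)]) v := by
    rw [hasDerivAt_pi]
    intro i
    fin_cases i <;> simp [zHyp] <;>
      first
        | exact hA.cosh.const_mul _
        | exact hB.cosh.const_mul _
        | exact hA.sinh.const_mul _
        | exact hB.sinh.const_mul _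
  exact h.deriv

lemma zuu_eq (α β p q : ℝ) (f g : ℝ → ℝ) (u v : ℝ) (hu : u ∈ Set.Ioo p q)
    (hfd : ∀ t ∈ Set.Ioo p q, DifferentiableAt ℝ f t)
    (hgd : ∀ t ∈ Set.Ioo p q, DifferentiableAt ℝ g t)
    (hf2 : DifferentiableAt ℝ (deriv f) u) (hg2 : DifferentiableAt ℝ (deriv g) u) :
    zHyp_uu α β f g u v =
      ![deriv (deriv f) u * Real.cosh (α * v), deriv (deriv g) u * Real.cosh (β * v),
        deriv (deriv f) u * Real.sinh (α * v), deriv (deriv g) u * Real.sinh (β * v)] := by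
  have hev : (fun t => zHyp_u α β f g t v) =ᶠ[nhds u]
      (fun t => ![deriv f t * Real.cosh (α * v), deriv g t * Real.cosh (β * v),
        deriv f t * Real.sinh (α * v), deriv g t * Real.sinh (β * v)]) := by
    filter_upwards [isOpen_Ioo.mem_nhds hu] with t ht
    exact zu_eq α β f g t v (hfd t ht) (hgd t ht)
  rw [zHyp_uu, hev.deriv_eq]
  have h : HasDerivAt (fun t => ![deriv f t * Real.cosh (α * v), deriv g t * Real.cosh (β * v),
        deriv f t * Real.sinh (α * v), deriv g t * Real.sinh (β * v)])
      (![deriv (deriv f) u * Real.cosh (α * v), deriv (deriv g) u * Real.cosh (β * v),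
        deriv (deriv f) u * Real.sinh (α * v), deriv (deriv g) u * Real.sinh (β * v)]) u := by
    rw [hasDerivAt_pi]
    intro i
    fin_cases i <;> simp <;>
      first
        | exact hf2.hasDerivAt.mul_const _
        | exact hg2.hasDerivAt.mul_const _
  exact h.deriv

lemma zuv_eq (α β : ℝ) (f g : ℝ → ℝ) (u v : ℝ)
    (hf : DifferentiableAt ℝ f u) (hg : DifferentiableAt ℝ g u) :
    zHyp_uv α β f g u v =
      ![deriv f u * (Real.sinh (α * v) * α), deriv g u * (Real.sinh (β * v) * β),
        deriv f u * (Real.cosh (α * v) * α), deriv g u * (Real.cosh (β * v) * β)] := by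
  have hev : (fun t => zHyp_u α β f g u t) =
      (fun t => ![deriv f u * Real.cosh (α * t), deriv g u * Real.cosh (β * t),
        deriv f u * Real.sinh (α * t), deriv g u * Real.sinh (β * t)]) :=
    funext fun t => zu_eq α β f g u t hf hg
  rw [zHyp_uv, hev]
  have hA : HasDerivAt (fun t : ℝ => α * t) α v := by
    simpa using (hasDerivAt_id v).const_mul α
  have hB : HasDerivAt (fun t : ℝ => β * t) β v := by
    simpa using (hasDerivAt_id v).const_mul β
  have h : HasDerivAt (fun t => ![deriv f u * Real.cosh (α * t), deriv g u * Real.cosh (β * t),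
        deriv f u * Real.sinh (α * t), deriv g u * Real.sinh (β * t)])
      (![deriv f u * (Real.sinh (α * v) * α), deriv g u * (Real.sinh (β * v) * β),
        deriv f u * (Real.cosh (α * v) * α), deriv g u * (Real.cosh (β * v) * β)]) v := by
    rw [hasDerivAt_pi]
    intro i
    fin_cases i <;> simp <;>
      first
        | exact hA.cosh.const_mul _
        | exact hB.cosh.const_mul _
        | exact hA.sinh.const_mul _
        | exact hB.sinh.const_mul _
  exact h.deriv

lemma zvv_eq (α β : ℝ) (f g : ℝ → ℝ) (u v : ℝ) :
    zHyp_vv α β f g u v =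
      ![f u * (Real.cosh (α * v) * α * α), g u * (Real.cosh (β * v) * β * β),
        f u * (Real.sinh (α * v) * α * α), g u * (Real.sinh (β * v) * β * β)] := by
  have hev : (fun t => zHyp_v α β f g u t) =
      (fun t => ![f u * (Real.sinh (α * t) * α), g u * (Real.sinh (β * t) * β),
        f u * (Real.cosh (α * t) * α), g u * (Real.cosh (β * t) * β)]) :=
    funext fun t => zv_eq α β f g u t
  rw [zHyp_vv, hev]
  have hA : HasDerivAt (fun t : ℝ => α * t) α v := by
    simpa using (hasDerivAt_id v).const_mul α
  have hB : HasDerivAt (fun t : ℝ => β * t) β v := by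
    simpa using (hasDerivAt_id v).const_mul β
  have h : HasDerivAt (fun t => ![f u * (Real.sinh (α * t) * α), g u * (Real.sinh (β * t) * β),
        f u * (Real.cosh (α * t) * α), g u * (Real.cosh (β * t) * β)])
      (![f u * (Real.cosh (α * v) * α * α), g u * (Real.cosh (β * v) * β * β),
        f u * (Real.sinh (α * v) * α * α), g u * (Real.sinh (β * v) * β * β)]) v := by
    rw [hasDerivAt_pi]
    intro i
    fin_cases i <;> simp <;>
      first
        | exact ((hA.cosh.mul_const α).const_mul _)
        | exact ((hB.cosh.mul_const β).const_mul _)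
        | exact ((hA.sinh.mul_const α).const_mul _)
        | exact ((hB.sinh.mul_const β).const_mul _)
  exact h.deriv

/-- Every general rotational surface of hyperbolic type is a Chen surface:
`tr(A₁ ∘ A₂) = 0` at every point, hence the allied mean curvature vector
`a(H) = (‖H‖/2)·tr(A₁∘A₂)·n₂` vanishes identically. -/
theorem chen_surface_hyperbolic
    (α β p q : ℝ) (hα : 0 < α) (hβ : 0 < β) (hpq : p < q)
    (f g : ℝ → ℝ)
    (hf : ContDiffOn ℝ (⊤ : ℕ∞) f (Set.Ioo p q)) (hg : ContDiffOn ℝ (⊤ : ℕ∞) g (Set.Ioo p q))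
    (h1 : ∀ u ∈ Set.Ioo p q, 0 < (deriv f u) ^ 2 + (deriv g u) ^ 2)
    (h2 : ∀ u ∈ Set.Ioo p q, 0 < α ^ 2 * (f u) ^ 2 + β ^ 2 * (g u) ^ 2) :
    ∀ u ∈ Set.Ioo p q, ∀ v : ℝ,
      Matrix.trace (shapeHyp α β f g u v (n1Hyp α β f g u v) *
        shapeHyp α β f g u v (n2Hyp α β f g u v)) = 0 ∧
      ∀ normH : ℝ,
        (normH / 2 * Matrix.trace (shapeHyp α β f g u v (n1Hyp α β f g u v) *
          shapeHyp α β f g u v (n2Hyp α β f g u v))) • n2Hyp α β f g u v = 0 := by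

  intro u hu v
  have hfd : ∀ t ∈ Set.Ioo p q, DifferentiableAt ℝ f t := fun t ht =>
    (hf.contDiffAt (isOpen_Ioo.mem_nhds ht)).differentiableAt (by simp)
  have hgd : ∀ t ∈ Set.Ioo p q, DifferentiableAt ℝ g t := fun t ht =>
    (hg.contDiffAt (isOpen_Ioo.mem_nhds ht)).differentiableAt (by simp)
  have hf2 : DifferentiableAt ℝ (deriv f) u :=
    ((hf.deriv_of_isOpen (m := 1) isOpen_Ioo (by exact WithTop.coe_le_coe.mpr le_top)).contDiffAt
      (isOpen_Ioo.mem_nhds hu)).differentiableAt one_ne_zero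
  have hg2 : DifferentiableAt ℝ (deriv g) u :=
    ((hg.deriv_of_isOpen (m := 1) isOpen_Ioo (by exact WithTop.coe_le_coe.mpr le_top)).contDiffAt
      (isOpen_Ioo.mem_nhds hu)).differentiableAt one_ne_zero
  have hzu := zu_eq α β f g u v (hfd u hu) (hgd u hu)
  have hzv := zv_eq α β f g u v
  have hzuu := zuu_eq α β p q f g u v hu hfd hgd hf2 hg2
  have hzuv := zuv_eq α β f g u v (hfd u hu) (hgd u hu)
  have hzvv := zvv_eq α β f g u v
  have hch1 := Real.cosh_sq_sub_sinh_sq (α * v)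
  have hch2 := Real.cosh_sq_sub_sinh_sq (β * v)
  have hE : neutralMetric (zHyp_u α β f g u v) (zHyp_u α β f g u v)
      = (deriv f u) ^ 2 + (deriv g u) ^ 2 := by
    rw [hzu]; simp only [neutralMetric, Matrix.cons_val_zero, Matrix.cons_val_one,
      Matrix.head_cons]
    simp
    linear_combination (deriv f u) ^ 2 * hch1 + (deriv g u) ^ 2 * hch2
  have hG : neutralMetric (zHyp_v α β f g u v) (zHyp_v α β f g u v)
      = -(α ^ 2 * (f u) ^ 2 + β ^ 2 * (g u) ^ 2) := by
    rw [hzv]; simp [neutralMetric]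
    linear_combination (-(α ^ 2 * (f u) ^ 2)) * hch1 + (-(β ^ 2 * (g u) ^ 2)) * hch2
  have hEne : neutralMetric (zHyp_u α β f g u v) (zHyp_u α β f g u v) ≠ 0 := by
    rw [hE]; exact ne_of_gt (h1 u hu)
  have hGne : neutralMetric (zHyp_v α β f g u v) (zHyp_v α β f g u v) ≠ 0 := by
    rw [hG]; exact neg_ne_zero.mpr (ne_of_gt (h2 u hu))
  -- inverse of the first fundamental form matrix
  have hGinv : (G1Hyp α β f g u v)⁻¹ =
      !![(neutralMetric (zHyp_u α β f g u v) (zHyp_u α β f g u v))⁻¹, 0;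
         0, (neutralMetric (zHyp_v α β f g u v) (zHyp_v α β f g u v))⁻¹] := by
    apply Matrix.inv_eq_right_inv
    rw [G1Hyp, Matrix.mul_fin_two]
    simp [mul_inv_cancel₀ hEne, mul_inv_cancel₀ hGne, Matrix.one_fin_two]
  -- key vanishing facts
  have huvn1 : neutralMetric (zHyp_uv α β f g u v) (n1Hyp α β f g u v) = 0 := by
    rw [hzuv, n1Hyp]; simp [neutralMetric]; ring
  have huun2 : neutralMetric (zHyp_uu α β f g u v) (n2Hyp α β f g u v) = 0 := by
    rw [hzuu, n2Hyp]; simp [neutralMetric]; ring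
  have hvvn2 : neutralMetric (zHyp_vv α β f g u v) (n2Hyp α β f g u v) = 0 := by
    rw [hzvv, n2Hyp]; simp [neutralMetric]; ring
  have htr : Matrix.trace (shapeHyp α β f g u v (n1Hyp α β f g u v) *
      shapeHyp α β f g u v (n2Hyp α β f g u v)) = 0 := by
    rw [shapeHyp, shapeHyp, hGinv, secFFHyp, secFFHyp, huvn1, huun2, hvvn2,
      Matrix.mul_fin_two, Matrix.mul_fin_two, Matrix.mul_fin_two, Matrix.trace_fin_two_of]
    ring
  refine ⟨htr, fun normH => ?_⟩
  rw [htr]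
  simp

end
end

section
/- Let α, β > 0 and let f, g be smooth real functions on an open interval J with f'(u)² − g'(u)² = 1 and α²f(u)² − β²g(u)² < 0 on J, satisfying the minimality equation (g'f'' − f'g'')·(β²g² − α²f²) = (β²gf' − α²fg')·(f'² − g'²) on J. Then the function u ↦ α²β²·(f(u)g'(u) − g(u)f'(u))² − (β²g(u)f'(u) − α²f(u)g'(u))² is constant on J. -/
/-- First integral for minimal general rotational surfaces of elliptic type: for an
arclength-parametrized minimal meridian, the quantity
`α²β²(fg' - gf')² - (β²gf' - α²fg')²` is constant on `J`. -/
theorem first_integral_minimal_elliptic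
    (α β p q : ℝ) (hα : 0 < α) (hβ : 0 < β) (hpq : p < q)
    (f g : ℝ → ℝ)
    (hf : ContDiffOn ℝ (⊤ : ℕ∞) f (Set.Ioo p q)) (hg : ContDiffOn ℝ (⊤ : ℕ∞) g (Set.Ioo p q))
    (h1 : ∀ u ∈ Set.Ioo p q, (deriv f u) ^ 2 - (deriv g u) ^ 2 = 1)
    (h2 : ∀ u ∈ Set.Ioo p q, α ^ 2 * (f u) ^ 2 - β ^ 2 * (g u) ^ 2 < 0)
    (hmin : ∀ u ∈ Set.Ioo p q,
      (deriv g u * deriv (deriv f) u - deriv f u * deriv (deriv g) u) *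
          (β ^ 2 * (g u) ^ 2 - α ^ 2 * (f u) ^ 2)
        = (β ^ 2 * g u * deriv f u - α ^ 2 * f u * deriv g u) *
          ((deriv f u) ^ 2 - (deriv g u) ^ 2)) :
    ∃ k : ℝ, ∀ u ∈ Set.Ioo p q,
      α ^ 2 * β ^ 2 * (f u * deriv g u - g u * deriv f u) ^ 2
        - (β ^ 2 * g u * deriv f u - α ^ 2 * f u * deriv g u) ^ 2 = k := by
  set s : Set ℝ := Set.Ioo p q with hs
  have hso : IsOpen s := isOpen_Ioo
  have hsc : Convex ℝ s := convex_Ioo p q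
  -- basic differentiability
  have hf1 : ContDiffOn ℝ (⊤ : ℕ∞) (deriv f) s := hf.deriv_of_isOpen hso (by simp)
  have hg1 : ContDiffOn ℝ (⊤ : ℕ∞) (deriv g) s := hg.deriv_of_isOpen hso (by simp)
  have hfd : ∀ u ∈ s, HasDerivAt f (deriv f u) u := fun u hu =>
    (((hf.contDiffAt (hso.mem_nhds hu)).differentiableAt (by simp))).hasDerivAt
  have hgd : ∀ u ∈ s, HasDerivAt g (deriv g u) u := fun u hu =>
    (((hg.contDiffAt (hso.mem_nhds hu)).differentiableAt (by simp))).hasDerivAt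
  have hfd2 : ∀ u ∈ s, HasDerivAt (deriv f) (deriv (deriv f) u) u := fun u hu =>
    (((hf1.contDiffAt (hso.mem_nhds hu)).differentiableAt (by simp))).hasDerivAt
  have hgd2 : ∀ u ∈ s, HasDerivAt (deriv g) (deriv (deriv g) u) u := fun u hu =>
    (((hg1.contDiffAt (hso.mem_nhds hu)).differentiableAt (by simp))).hasDerivAt
  -- e2 : x X - y Y = 0 on s (differentiating h1)
  have e2 : ∀ u ∈ s, deriv f u * deriv (deriv f) u - deriv g u * deriv (deriv g) u = 0 := by
    intro u hu
    have hD : HasDerivAt (fun t => (deriv f t) ^ 2 - (deriv g t) ^ 2)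
        (2 * deriv f u * deriv (deriv f) u - 2 * deriv g u * deriv (deriv g) u) u := by
      have := (((hfd2 u hu).pow 2).sub ((hgd2 u hu).pow 2))
      exact this.congr_deriv (by ring)
    have hEq : (fun t => (deriv f t) ^ 2 - (deriv g t) ^ 2) =ᶠ[nhds u] fun _ => (1 : ℝ) := by
      filter_upwards [hso.mem_nhds hu] with t ht using h1 t ht
    have h0 : HasDerivAt (fun t => (deriv f t) ^ 2 - (deriv g t) ^ 2) 0 u :=
      (hasDerivAt_const u (1 : ℝ)).congr_of_eventuallyEq hEq
    have := hD.unique h0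
    linarith
  -- Φ has derivative 0 everywhere on s
  set Φ : ℝ → ℝ := fun u =>
    α ^ 2 * β ^ 2 * (f u * deriv g u - g u * deriv f u) ^ 2
      - (β ^ 2 * g u * deriv f u - α ^ 2 * f u * deriv g u) ^ 2 with hΦ
  have hΦd : ∀ u ∈ s, HasDerivAt Φ 0 u := by
    intro u hu
    set F := f u with hF; set G := g u with hG
    set x := deriv f u with hx; set y := deriv g u with hy
    set X := deriv (deriv f) u with hX0; set Y := deriv (deriv g) u with hY0
    have h1' : HasDerivAt (fun t => f t * deriv g t - g t * deriv f t)
        (F * Y - G * X) u := by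
      have := (((hfd u hu).mul (hgd2 u hu)).sub ((hgd u hu).mul (hfd2 u hu)))
      exact this.congr_deriv (by ring)
    have h2' : HasDerivAt (fun t => β ^ 2 * g t * deriv f t - α ^ 2 * f t * deriv g t)
        (β ^ 2 * (y * x + G * X) - α ^ 2 * (x * y + F * Y)) u := by
      have := ((((hasDerivAt_const u (β ^ 2)).mul (hgd u hu)).mul (hfd2 u hu)).sub
          (((hasDerivAt_const u (α ^ 2)).mul (hfd u hu)).mul (hgd2 u hu)))
      exact this.congr_deriv (by simp only [Pi.mul_apply]; ring)
    have hder : HasDerivAt Φ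
        (α ^ 2 * β ^ 2 * (2 * (F * y - G * x) * (F * Y - G * X))
          - 2 * (β ^ 2 * G * x - α ^ 2 * F * y)
            * (β ^ 2 * (y * x + G * X) - α ^ 2 * (x * y + F * Y))) u := by
      have := (((hasDerivAt_const u (α ^ 2 * β ^ 2)).mul (h1'.pow 2)).sub (h2'.pow 2))
      exact this.congr_deriv (by ring)
    -- the derivative value vanishes
    have e1u := h1 u hu
    have e2u := e2 u hu
    have hm := hmin u hu
    simp only [← hX0, ← hY0, ← hx, ← hy, ← hF, ← hG] at e1u e2u hm
    set w : ℝ := y * X - x * Y with hw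
    have hXe : X = -(y * w) := by
      rw [hw]; linear_combination (-X) * e1u + x * e2u
    have hYe : Y = -(x * w) := by
      rw [hw]; linear_combination (-Y) * e1u + y * e2u
    have e3 : w * (β ^ 2 * G ^ 2 - α ^ 2 * F ^ 2) = β ^ 2 * G * x - α ^ 2 * F * y := by
      rw [hw]; linear_combination hm + (β ^ 2 * G * x - α ^ 2 * F * y) * e1u
    have hval : α ^ 2 * β ^ 2 * (2 * (F * y - G * x) * (F * Y - G * X))
          - 2 * (β ^ 2 * G * x - α ^ 2 * F * y)
            * (β ^ 2 * (y * x + G * X) - α ^ 2 * (x * y + F * Y)) = 0 := by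
      rw [hXe, hYe]
      linear_combination (2 * (β ^ 2 - α ^ 2) * x * y) * e3
    exact hval ▸ hder
  -- constancy on the convex open set
  have hdiff : DifferentiableOn ℝ Φ s := fun u hu =>
    ((hΦd u hu).differentiableAt).differentiableWithinAt
  have hzero : ∀ x ∈ s, fderivWithin ℝ Φ s x = 0 := by
    intro x hx
    rw [fderivWithin_of_isOpen hso hx, (hΦd x hx).hasFDerivAt.fderiv]
    ext
    simp
  have hu₀ : (p + q) / 2 ∈ s := by constructor <;> [linarith; linarith]
  refine ⟨Φ ((p + q) / 2), fun u hu => ?_⟩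
  exact hsc.is_const_of_fderivWithin_eq_zero hdiff hzero hu hu₀
end

section
/- Let α, β > 0 and let f, g be smooth real functions on an open interval J with f'(u)² + g'(u)² = 1 and α²f(u)² + β²g(u)² > 0 on J, satisfying the minimality equation (f'² + g'²)·(β²f'g − α²fg') + (α²f² + β²g²)·(f''g' − f'g'') = 0 on J. Then the function u ↦ α²β²·(f(u)g'(u) − f'(u)g(u))² − (α²f(u)g'(u) − β²g(u)f'(u))² is constant on J. -/
/-- First integral for minimal general rotational surfaces of hyperbolic type: for an
arclength-parametrized minimal meridian, the quantity
`α²β²(fg' - f'g)² - (α²fg' - β²gf')²` is constant on `J`. -/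
theorem first_integral_minimal_hyperbolic
    (α β p q : ℝ) (hα : 0 < α) (hβ : 0 < β) (hpq : p < q)
    (f g : ℝ → ℝ)
    (hf : ContDiffOn ℝ (⊤ : ℕ∞) f (Set.Ioo p q)) (hg : ContDiffOn ℝ (⊤ : ℕ∞) g (Set.Ioo p q))
    (h1 : ∀ u ∈ Set.Ioo p q, (deriv f u) ^ 2 + (deriv g u) ^ 2 = 1)
    (h2 : ∀ u ∈ Set.Ioo p q, 0 < α ^ 2 * (f u) ^ 2 + β ^ 2 * (g u) ^ 2)
    (hmin : ∀ u ∈ Set.Ioo p q,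
      ((deriv f u) ^ 2 + (deriv g u) ^ 2) *
          (β ^ 2 * deriv f u * g u - α ^ 2 * f u * deriv g u)
        + (α ^ 2 * (f u) ^ 2 + β ^ 2 * (g u) ^ 2) *
          (deriv (deriv f) u * deriv g u - deriv f u * deriv (deriv g) u) = 0) :
    ∃ k : ℝ, ∀ u ∈ Set.Ioo p q,
      α ^ 2 * β ^ 2 * (f u * deriv g u - deriv f u * g u) ^ 2
        - (α ^ 2 * f u * deriv g u - β ^ 2 * g u * deriv f u) ^ 2 = k := by
  set s : Set ℝ := Set.Ioo p q with hs_def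
  have hs : IsOpen s := isOpen_Ioo
  have hconv : Convex ℝ s := convex_Ioo p q
  set F : ℝ → ℝ := fun u =>
      α ^ 2 * β ^ 2 * (f u * deriv g u - deriv f u * g u) ^ 2
        - (α ^ 2 * f u * deriv g u - β ^ 2 * g u * deriv f u) ^ 2 with hF_def
  -- differentiability facts
  have hf1 : ContDiffOn ℝ (⊤ : ℕ∞) (deriv f) s := hf.deriv_of_isOpen hs (by simp)
  have hg1 : ContDiffOn ℝ (⊤ : ℕ∞) (deriv g) s := hg.deriv_of_isOpen hs (by simp)
  have hdf : ∀ u ∈ s, HasDerivAt f (deriv f u) u := fun u hu =>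
    ((hf.differentiableOn (by simp)).differentiableAt (hs.mem_nhds hu)).hasDerivAt
  have hdg : ∀ u ∈ s, HasDerivAt g (deriv g u) u := fun u hu =>
    ((hg.differentiableOn (by simp)).differentiableAt (hs.mem_nhds hu)).hasDerivAt
  have hdf1 : ∀ u ∈ s, HasDerivAt (deriv f) (deriv (deriv f) u) u := fun u hu =>
    ((hf1.differentiableOn (by simp)).differentiableAt (hs.mem_nhds hu)).hasDerivAt
  have hdg1 : ∀ u ∈ s, HasDerivAt (deriv g) (deriv (deriv g) u) u := fun u hu =>
    ((hg1.differentiableOn (by simp)).differentiableAt (hs.mem_nhds hu)).hasDerivAt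
  -- F has derivative 0 everywhere on s
  have hF0 : ∀ u ∈ s, HasDerivAt F 0 u := by
    intro u hu
    set A := f u
    set B := g u
    set a := deriv f u
    set b := deriv g u
    set a1 := deriv (deriv f) u
    set b1 := deriv (deriv g) u
    have hA := hdf u hu
    have hB := hdg u hu
    have ha := hdf1 u hu
    have hb := hdg1 u hu
    -- derivative of a² + b² is zero (it is constantly 1 near u)
    have horth : a * a1 + b * b1 = 0 := by
      have hconst : HasDerivAt (fun u => (deriv f u) ^ 2 + (deriv g u) ^ 2) 0 u := by
        refine (hasDerivAt_const u (1 : ℝ)).congr_of_eventuallyEq ?_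
        filter_upwards [hs.mem_nhds hu] with x hx
        exact h1 x hx
      have hcomb : HasDerivAt (fun u => (deriv f u) ^ 2 + (deriv g u) ^ 2)
          (2 * a ^ 1 * a1 + 2 * b ^ 1 * b1) u := (ha.pow 2).add (hb.pow 2)
      have := hconst.unique hcomb
      nlinarith [this]
    -- key relations
    have hab : a ^ 2 + b ^ 2 = 1 := h1 u hu
    set c : ℝ := a1 * b - a * b1 with hc_def
    have ha1 : a1 = c * b := by
      have := horth
      have := hab
      linear_combination a * horth - a1 * hab
    have hb1 : b1 = -(c * a) := by
      linear_combination b * horth - b1 * hab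
    set G : ℝ := α ^ 2 * A ^ 2 + β ^ 2 * B ^ 2 with hG_def
    have hGpos : 0 < G := h2 u hu
    have hGc : G * c = α ^ 2 * A * b - β ^ 2 * a * B := by
      have hm := hmin u hu
      rw [hab] at hm
      linear_combination hm
    -- derivative of F by combinators
    have hQ : HasDerivAt (fun u => f u * deriv g u - deriv f u * g u)
        ((a * b + A * b1) - (a1 * B + a * b)) u := (hA.mul hb).sub (ha.mul hB)
    have hW : HasDerivAt (fun u => α ^ 2 * f u * deriv g u - β ^ 2 * g u * deriv f u)
        ((α ^ 2 * a * b + α ^ 2 * A * b1) - (β ^ 2 * b * a + β ^ 2 * B * a1)) u := by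
      have h1' : HasDerivAt (fun u => α ^ 2 * (f u * deriv g u))
          (α ^ 2 * (a * b + A * b1)) u := (hA.mul hb).const_mul _
      have h2' : HasDerivAt (fun u => β ^ 2 * (g u * deriv f u))
          (β ^ 2 * (b * a + B * a1)) u := (hB.mul ha).const_mul _
      have := h1'.sub h2'
      refine (this.congr_deriv (by ring)).congr_of_eventuallyEq (Filter.Eventually.of_forall fun x => ?_)
      simp only [Pi.sub_apply]; ring
    have hFd : HasDerivAt F
        (α ^ 2 * β ^ 2 * (2 * (A * b - a * B) ^ 1 * ((a * b + A * b1) - (a1 * B + a * b)))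
          - 2 * (α ^ 2 * A * b - β ^ 2 * B * a) ^ 1 *
            ((α ^ 2 * a * b + α ^ 2 * A * b1) - (β ^ 2 * b * a + β ^ 2 * B * a1))) u := by
      exact ((hQ.pow 2).const_mul (α ^ 2 * β ^ 2)).sub (hW.pow 2)
    -- the derivative expression vanishes
    have hE : α ^ 2 * β ^ 2 * (2 * (A * b - a * B) ^ 1 * ((a * b + A * b1) - (a1 * B + a * b)))
          - 2 * (α ^ 2 * A * b - β ^ 2 * B * a) ^ 1 *
            ((α ^ 2 * a * b + α ^ 2 * A * b1) - (β ^ 2 * b * a + β ^ 2 * B * a1)) = 0 := by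
      rw [ha1, hb1]
      have hGE : G * (α ^ 2 * β ^ 2 * (2 * (A * b - a * B) ^ 1 *
            ((a * b + A * (-(c * a))) - ((c * b) * B + a * b)))
          - 2 * (α ^ 2 * A * b - β ^ 2 * B * a) ^ 1 *
            ((α ^ 2 * a * b + α ^ 2 * A * (-(c * a)))
              - (β ^ 2 * b * a + β ^ 2 * B * (c * b)))) = 0 := by
        linear_combination (2 * (α ^ 2 * A * b - β ^ 2 * a * B) * (α ^ 2 * A * a + β ^ 2 * B * b)
          - 2 * α ^ 2 * β ^ 2 * (A * b - a * B) * (A * a + B * b)) * hGc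
          + (α ^ 2 - β ^ 2) * 2 * a * b * G * hab * 0
      have := mul_eq_zero.mp hGE
      rcases this with h | h
      · exact absurd h (ne_of_gt hGpos)
      · exact h
    rw [← hE]
    exact hFd
  -- conclude F is constant on s
  have hFdiff : DifferentiableOn ℝ F s := fun u hu =>
    ((hF0 u hu).differentiableAt).differentiableWithinAt
  have hFder : ∀ u ∈ s, fderivWithin ℝ F s u = 0 := by
    intro u hu
    rw [fderivWithin_eq_fderiv (hs.uniqueDiffOn u hu) (hF0 u hu).differentiableAt]
    exact (hF0 u hu).hasFDerivAt.fderiv.symm ▸ by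
      ext x; simp
  refine ⟨F ((p + q) / 2), fun u hu => ?_⟩
  have hmid : (p + q) / 2 ∈ s := by constructor <;> simp [hs_def] at * <;> linarith
  exact hconv.is_const_of_fderivWithin_eq_zero hFdiff hFder hu hmid
end
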